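/- arXiv:math/0607184 — 6 statements merged into one kernel-verified Lean document; each statement's English description precedes it below -/
import Mathlib

section
/- Let G be a group, w ∈ G, and A, B elementwise-commuting subgroups of G. Suppose u₁ = a₁wb₁ and u₂ = b₂wa₂ with a₁,a₂ ∈ A and b₁,b₂ ∈ B. If an eavesdropper finds any pair a' ∈ A, b' ∈ B with a'wb' = u₁, then a'u₂b' equals the shared key a₁b₂wa₂b₁. -/
theorem eavesdropper_recovers_key {G : Type*} [Group G] (A B : Subgroup G)
    (hcomm : ∀ a ∈ A, ∀ b ∈ B, a * b = b * a)
    (w a₁ a₂ b₁ b₂ a' b' u₁ u₂ : G)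
    (ha₁ : a₁ ∈ A) (ha₂ : a₂ ∈ A) (hb₁ : b₁ ∈ B) (hb₂ : b₂ ∈ B)
    (ha' : a' ∈ A) (hb' : b' ∈ B)
    (hu₁ : u₁ = a₁ * w * b₁) (hu₂ : u₂ = b₂ * w * a₂)
    (hsol : a' * w * b' = u₁) :
    a' * u₂ * b' = a₁ * b₂ * w * a₂ * b₁ := by
  have h1 : a' * b₂ = b₂ * a' := hcomm a' ha' b₂ hb₂
  have h2 : a₂ * b' = b' * a₂ := hcomm a₂ ha₂ b' hb'
  have h3 : a₁ * b₂ = b₂ * a₁ := hcomm a₁ ha₁ b₂ hb₂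
  have h4 : a₂ * b₁ = b₁ * a₂ := hcomm a₂ ha₂ b₁ hb₁
  subst hu₂
  calc a' * (b₂ * w * a₂) * b'
      = (a' * b₂) * w * (a₂ * b') := by group
    _ = b₂ * (a' * w * b') * a₂ := by rw [h1, h2]; group
    _ = b₂ * (a₁ * w * b₁) * a₂ := by rw [hsol, hu₁]
    _ = (a₁ * b₂) * w * (a₂ * b₁) := by rw [h3, h4]; group
    _ = a₁ * b₂ * w * a₂ * b₁ := by group
end

section
/- The subgroup A₂ = ⟨x₀x₁⁻¹, x₀x₂⁻¹⟩ of PL₂([0,1]) equals PL₂([0, 7/8]), the group of PL homeomorphisms supported on [0, 7/8]. -/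
/-- The standard generator `x₀` of `PL₂([0,1])`, extended by the identity outside `[0,1]`. -/
noncomputable def x0fun (t : ℝ) : ℝ :=
  if t < 0 then t
  else if t ≤ 1/2 then t/2
  else if t ≤ 3/4 then t - 1/4
  else if t ≤ 1 then 2*t - 1
  else t

/-- The generator `x_k`: the identity on `[0, 1 - 2⁻ᵏ]` and a shrunken copy of `x₀`
on `[1 - 2⁻ᵏ, 1]`. -/
noncomputable def xkfun (k : ℕ) (t : ℝ) : ℝ :=
  if t ≤ 1 - (2:ℝ)^(-(k:ℤ)) then t
  else if t ≤ 1 then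
    (1 - (2:ℝ)^(-(k:ℤ))) + (2:ℝ)^(-(k:ℤ)) * x0fun ((2:ℝ)^(k:ℤ) * (t - (1 - (2:ℝ)^(-(k:ℤ)))))
  else t

/-- A dyadic rational real number. -/
def IsDyadic (t : ℝ) : Prop := ∃ a : ℤ, ∃ n : ℕ, t = (a : ℝ) / 2 ^ n

/-- Membership in `PL₂([0,1])`: a permutation of `ℝ` that is continuous, strictly
increasing, the identity outside `[0,1]`, and piecewise linear with finitely many
breakpoints, all breakpoints dyadic and all slopes integer powers of `2`. -/
def IsPL2 (f : Equiv.Perm ℝ) : Prop :=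
  Continuous ⇑f ∧ StrictMono ⇑f ∧ (∀ t : ℝ, t ≤ 0 ∨ 1 ≤ t → f t = t) ∧
  ∃ P : Finset ℝ, (∀ p ∈ P, IsDyadic p) ∧
    ∀ x : ℝ, x ∉ P → ∃ n : ℤ, ∀ᶠ t in nhds x, f t = f x + 2 ^ n * (t - x)

/-- The subgroup `PL₂([0,d])` of elements of `PL₂([0,1])` that are the identity on `[d,1]`. -/
def PL2below (d : ℝ) : Set (Equiv.Perm ℝ) := {f | IsPL2 f ∧ ∀ t : ℝ, d ≤ t → f t = t}

/-- The subgroup `PL₂([d,1])` of elements of `PL₂([0,1])` that are the identity on `[0,d]`. -/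
def PL2above (d : ℝ) : Set (Equiv.Perm ℝ) := {f | IsPL2 f ∧ ∀ t : ℝ, t ≤ d → f t = t}
noncomputable section
namespace A2PL

open Finset

/-- `[u,v]` is a standard dyadic interval. -/
def Std (u v : ℝ) : Prop := ∃ (k : ℕ) (a : ℤ), u = (a : ℝ) / 2^k ∧ v = ((a : ℝ)+1) / 2^k

lemma Std.lt {u v : ℝ} (h : Std u v) : u < v := by
  obtain ⟨k, a, hu, hv⟩ := h
  rw [hu, hv]
  have h2 : (0:ℝ) < 1 / 2^k := by positivity
  have h3 : ((a:ℝ)+1)/2^k - (a:ℝ)/2^k = 1/2^k := by ring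
  linarith

lemma Std.dyadic {u v : ℝ} (h : Std u v) : IsDyadic u := by
  obtain ⟨k, a, hu, _⟩ := h
  exact ⟨a, k, hu⟩

lemma dyadic78 : IsDyadic (7/8 : ℝ) := ⟨7, 3, by norm_num⟩

/-- mono for chains of standard intervals -/
lemma chain_mono {m : ℕ} {p : ℕ → ℝ} (h : ∀ i, i < m → Std (p i) (p (i+1))) :
    ∀ {i j}, i ≤ j → j ≤ m → p i ≤ p j := by
  intro i j hij hjm
  induction j with
  | zero => interval_cases i; rfl
  | succ n ih =>
    rcases Nat.eq_or_lt_of_le hij with rfl | hlt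
    · rfl
    · exact le_trans (ih (by omega) (by omega)) (h n (by omega)).lt.le

lemma chain_strict {m : ℕ} {p : ℕ → ℝ} (h : ∀ i, i < m → Std (p i) (p (i+1))) :
    ∀ {i j}, i < j → j ≤ m → p i < p j := by
  intro i j hij hjm
  have h1 : p i ≤ p (j-1) := chain_mono h (by omega) (by omega)
  have h2 : p (j-1) < p j := by
    have := (h (j-1) (by omega)).lt
    have hj : j - 1 + 1 = j := by omega
    rwa [hj] at this
  linarith

lemma chain_locate {m : ℕ} {p : ℕ → ℝ} (h : ∀ i, i < m → Std (p i) (p (i+1))) {t : ℝ}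
    (h0 : p 0 ≤ t) (hm : t < p m) : ∃ j, j < m ∧ p j ≤ t ∧ t < p (j+1) := by
  classical
  set Q := (Finset.range (m+1)).filter (fun i => p i ≤ t) with hQ
  have h0Q : 0 ∈ Q := by simp [hQ, h0]
  have hne : Q.Nonempty := ⟨0, h0Q⟩
  set j := Q.max' hne with hj
  have hjQ : j ∈ Q := Q.max'_mem hne
  have hjm : j ≤ m := by
    have := (Finset.mem_filter.mp hjQ).1
    simpa using Nat.lt_succ_iff.mp (Finset.mem_range.mp this)
  have hjt : p j ≤ t := (Finset.mem_filter.mp hjQ).2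
  have hjne : j ≠ m := by
    intro hEq
    rw [hEq] at hjt; linarith
  refine ⟨j, by omega, hjt, ?_⟩
  by_contra hcon
  push_neg at hcon
  have : j + 1 ∈ Q := by
    simp only [hQ, Finset.mem_filter, Finset.mem_range]
    exact ⟨by omega, hcon⟩
  have := Q.le_max' _ this
  omega

/-- A tiling of `[0,7/8]` by standard dyadic intervals. -/
structure Tiling where
  m : ℕ
  p : ℕ → ℝ
  hm : 3 ≤ m
  h0 : p 0 = 0
  htop : p m = 7/8
  hstd : ∀ i, i < m → Std (p i) (p (i+1))

namespace Tiling

lemma mono (T : Tiling) {i j : ℕ} (hij : i ≤ j) (hjm : j ≤ T.m) : T.p i ≤ T.p j :=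
  chain_mono T.hstd hij hjm

lemma strict (T : Tiling) {i j : ℕ} (hij : i < j) (hjm : j ≤ T.m) : T.p i < T.p j :=
  chain_strict T.hstd hij hjm

lemma nonneg (T : Tiling) {i : ℕ} (hi : i ≤ T.m) : 0 ≤ T.p i := by
  have := T.mono (Nat.zero_le i) hi
  rwa [T.h0] at this

lemma le78 (T : Tiling) {i : ℕ} (hi : i ≤ T.m) : T.p i ≤ 7/8 := by
  have := T.mono hi (le_refl T.m)
  rwa [T.htop] at this

lemma diff_pos (T : Tiling) {i : ℕ} (hi : i < T.m) : 0 < T.p (i+1) - T.p i :=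
  sub_pos.mpr (T.strict (Nat.lt_succ_self i) hi)

lemma dyadic (T : Tiling) {i : ℕ} (hi : i ≤ T.m) : IsDyadic (T.p i) := by
  rcases Nat.lt_or_ge i T.m with h | h
  · exact (T.hstd i h).dyadic
  · have : i = T.m := le_antisymm hi h
    rw [this, T.htop]; exact dyadic78

end Tiling

/-- The slope on the `i`-th piece of the map sending tiling `T` to tiling `S`. -/
def sl (T S : Tiling) (i : ℕ) : ℝ := (S.p (i+1) - S.p i) / (T.p (i+1) - T.p i)

lemma sl_pos {T S : Tiling} (hm : T.m = S.m) {i : ℕ} (hi : i < T.m) : 0 < sl T S i :=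
  div_pos (S.diff_pos (hm ▸ hi)) (T.diff_pos hi)

lemma sl_self {T : Tiling} {i : ℕ} (hi : i < T.m) : sl T T i = 1 :=
  div_self (ne_of_gt (T.diff_pos hi))

lemma sl_mul_diff {T S : Tiling} {i : ℕ} (hi : i < T.m) :
    sl T S i * (T.p (i+1) - T.p i) = S.p (i+1) - S.p i :=
  div_mul_cancel₀ _ (ne_of_gt (T.diff_pos hi))

/-- The PL homeomorphism of `ℝ` carrying tiling `T` onto tiling `S`. -/
def plf (T S : Tiling) (t : ℝ) : ℝ :=
  min t 0 + max (t - 7/8) 0 +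
    ∑ i ∈ Finset.range T.m, sl T S i * (min (max t (T.p i)) (T.p (i+1)) - T.p i)

lemma plf_nonpos (T S : Tiling) {t : ℝ} (ht : t ≤ 0) : plf T S t = t := by
  unfold plf
  rw [Finset.sum_eq_zero, min_eq_left ht, max_eq_right (by linarith : t - 7/8 ≤ 0)]
  · ring
  · intro i hi
    have hi' := Finset.mem_range.mp hi
    have h1 : t ≤ T.p i := le_trans ht (T.nonneg (by omega))
    rw [max_eq_right h1, min_eq_left (T.strict (Nat.lt_succ_self i) hi').le]
    ring

lemma plf_top {T S : Tiling} (hm : T.m = S.m) {t : ℝ} (ht : 7/8 ≤ t) : plf T S t = t := by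
  unfold plf
  have hsum : ∀ i ∈ Finset.range T.m,
      sl T S i * (min (max t (T.p i)) (T.p (i+1)) - T.p i) = S.p (i+1) - S.p i := by
    intro i hi
    have hi' := Finset.mem_range.mp hi
    have h1 : T.p i ≤ t := le_trans (T.le78 (by omega)) ht
    have h2 : T.p (i+1) ≤ t := le_trans (T.le78 (by omega)) ht
    rw [max_eq_left h1, min_eq_right h2, sl_mul_diff hi']
  rw [Finset.sum_congr rfl hsum, Finset.sum_range_sub (fun i => S.p i), S.h0, hm, S.htop,
    min_eq_right (by linarith : (0:ℝ) ≤ t), max_eq_left (by linarith : (0:ℝ) ≤ t - 7/8)]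
  ring

lemma plf_piece {T S : Tiling} (hm : T.m = S.m) {j : ℕ} (hj : j < T.m) {t : ℝ}
    (h1 : T.p j ≤ t) (h2 : t ≤ T.p (j+1)) :
    plf T S t = S.p j + sl T S j * (t - T.p j) := by
  unfold plf
  have h0t : 0 ≤ t := le_trans (T.nonneg (by omega)) h1
  have ht8 : t ≤ 7/8 := le_trans h2 (T.le78 (by omega))
  rw [min_eq_right h0t, max_eq_right (by linarith : t - 7/8 ≤ 0)]
  rw [Finset.range_eq_Ico, ← Finset.sum_Ico_consecutive _ (Nat.zero_le (j+1)) (by omega : j+1 ≤ T.m)]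
  have htail : ∀ i ∈ Finset.Ico (j+1) T.m,
      sl T S i * (min (max t (T.p i)) (T.p (i+1)) - T.p i) = 0 := by
    intro i hi
    obtain ⟨hi1, hi2⟩ := Finset.mem_Ico.mp hi
    have : t ≤ T.p i := le_trans h2 (T.mono hi1 (by omega))
    rw [max_eq_right this, min_eq_left (T.strict (Nat.lt_succ_self i) hi2).le]
    ring
  rw [Finset.sum_eq_zero htail, ← Finset.range_eq_Ico, Finset.sum_range_succ]
  have hterm : min (max t (T.p j)) (T.p (j+1)) = t := by
    rw [max_eq_left h1, min_eq_left h2]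
  rw [hterm]
  have hhead : ∀ i ∈ Finset.range j,
      sl T S i * (min (max t (T.p i)) (T.p (i+1)) - T.p i) = S.p (i+1) - S.p i := by
    intro i hi
    have hi' := Finset.mem_range.mp hi
    have ha : T.p i ≤ t := le_trans (T.mono (by omega) (by omega)) h1
    have hb : T.p (i+1) ≤ t := le_trans (T.mono (by omega : i+1 ≤ j) (by omega)) h1
    rw [max_eq_left ha, min_eq_right hb, sl_mul_diff (by omega)]
  rw [Finset.sum_congr rfl hhead, Finset.sum_range_sub (fun i => S.p i), S.h0]
  ring

lemma plf_value {T S : Tiling} (hm : T.m = S.m) {j : ℕ} (hj : j ≤ T.m) :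
    plf T S (T.p j) = S.p j := by
  rcases Nat.lt_or_ge j T.m with h | h
  · rw [plf_piece hm h (le_refl _) (T.strict (Nat.lt_succ_self j) h).le]
    ring
  · have hjm : j = T.m := le_antisymm hj h
    rw [hjm, T.htop, plf_top hm (le_refl _), ← S.htop, hm]

lemma plf_strictMono {T S : Tiling} (hm : T.m = S.m) : StrictMono (plf T S) := by
  intro t u htu
  unfold plf
  have hterm_le : ∀ i ∈ Finset.range T.m,
      sl T S i * (min (max t (T.p i)) (T.p (i+1)) - T.p i) ≤
      sl T S i * (min (max u (T.p i)) (T.p (i+1)) - T.p i) := by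
    intro i hi
    have hi' := Finset.mem_range.mp hi
    have hsl := (sl_pos hm hi').le
    apply mul_le_mul_of_nonneg_left _ hsl
    have : max t (T.p i) ≤ max u (T.p i) := max_le_max htu.le (le_refl _)
    have : min (max t (T.p i)) (T.p (i+1)) ≤ min (max u (T.p i)) (T.p (i+1)) :=
      min_le_min this (le_refl _)
    linarith
  have hmin : min t 0 ≤ min u 0 := min_le_min htu.le (le_refl _)
  have hmax : max (t - 7/8) 0 ≤ max (u - 7/8) 0 :=
    max_le_max (by linarith) (le_refl _)
  rcases lt_or_ge t 0 with h | h
  · have hstrict : min t 0 < min u 0 := by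
      rcases le_or_gt u 0 with hu | hu
      · rw [min_eq_left h.le, min_eq_left hu]; exact htu
      · rw [min_eq_left h.le, min_eq_right hu.le]; exact h
    have := Finset.sum_le_sum hterm_le
    linarith
  rcases lt_or_ge t (7/8) with h8 | h8
  · obtain ⟨j, hj, hjt, hjt'⟩ := chain_locate T.hstd (t := t) (by rw [T.h0]; exact h) (by rw [T.htop]; exact h8)
    have hstrict : ∑ i ∈ Finset.range T.m, sl T S i * (min (max t (T.p i)) (T.p (i+1)) - T.p i) <
        ∑ i ∈ Finset.range T.m, sl T S i * (min (max u (T.p i)) (T.p (i+1)) - T.p i) := by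
      apply Finset.sum_lt_sum hterm_le
      refine ⟨j, Finset.mem_range.mpr hj, ?_⟩
      apply mul_lt_mul_of_pos_left _ (sl_pos hm hj)
      have e1 : min (max t (T.p j)) (T.p (j+1)) = t := by
        rw [max_eq_left hjt, min_eq_left hjt'.le]
      have e2 : t < min (max u (T.p j)) (T.p (j+1)) := by
        apply lt_min
        · exact lt_of_lt_of_le htu (le_max_left _ _)
        · exact hjt'
      rw [e1]; linarith
    linarith
  · have hstrict : max (t - 7/8) 0 < max (u - 7/8) 0 := by
      rw [max_eq_left (by linarith : (0:ℝ) ≤ t - 7/8),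
        max_eq_left (by linarith : (0:ℝ) ≤ u - 7/8)]
      linarith
    have := Finset.sum_le_sum hterm_le
    linarith

lemma plf_cont (T S : Tiling) : Continuous (plf T S) := by
  unfold plf
  refine Continuous.add (Continuous.add ?_ ?_) ?_
  · exact continuous_id.min continuous_const
  · exact (continuous_id.sub continuous_const).max continuous_const
  · exact continuous_finset_sum _ fun i _ =>
      continuous_const.mul (((continuous_id.max continuous_const).min continuous_const).sub
        continuous_const)

lemma plf_surj {T S : Tiling} (hm : T.m = S.m) : Function.Surjective (plf T S) := by
  intro y
  rcases le_or_gt y 0 with h | h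
  · exact ⟨y, plf_nonpos T S h⟩
  rcases le_or_gt (7/8) y with h8 | h8
  · exact ⟨y, plf_top hm h8⟩
  · have h0 : plf T S 0 = 0 := plf_nonpos T S (le_refl _)
    have h78 : plf T S (7/8) = 7/8 := plf_top hm (le_refl _)
    have := intermediate_value_Icc (by norm_num : (0:ℝ) ≤ 7/8) (plf_cont T S).continuousOn
    rw [h0, h78] at this
    obtain ⟨t, _, ht⟩ := this ⟨h.le, h8.le⟩
    exact ⟨t, ht⟩

lemma plf_comp (T S R : Tiling) (h1 : T.m = S.m) (h2 : S.m = R.m) (t : ℝ) :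
    plf S R (plf T S t) = plf T R t := by
  rcases le_or_gt t 0 with h | h
  · rw [plf_nonpos T S h, plf_nonpos S R h, plf_nonpos T R h]
  rcases le_or_gt (7/8) t with h8 | h8
  · rw [plf_top h1 h8, plf_top h2 h8, plf_top (h1.trans h2) h8]
  · obtain ⟨j, hj, hjt, hjt'⟩ := chain_locate T.hstd (t := t) (by rw [T.h0]; exact h.le)
      (by rw [T.htop]; exact h8)
    rw [plf_piece h1 hj hjt hjt'.le]
    have hsl := sl_pos h1 hj
    have hu1 : S.p j ≤ S.p j + sl T S j * (t - T.p j) := by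
      have : 0 ≤ sl T S j * (t - T.p j) := mul_nonneg hsl.le (by linarith)
      linarith
    have hu2 : S.p j + sl T S j * (t - T.p j) ≤ S.p (j+1) := by
      have h3 : sl T S j * (t - T.p j) ≤ sl T S j * (T.p (j+1) - T.p j) :=
        mul_le_mul_of_nonneg_left (by linarith) hsl.le
      rw [sl_mul_diff hj] at h3
      linarith
    rw [plf_piece h2 (h1 ▸ hj) hu1 hu2, plf_piece (h1.trans h2) hj hjt hjt'.le]
    have hT := ne_of_gt (T.diff_pos hj)
    have hS := ne_of_gt (S.diff_pos (h1 ▸ hj))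
    have key : sl S R j * sl T S j = sl T R j := by
      unfold sl
      field_simp
    rw [show S.p j + sl T S j * (t - T.p j) - S.p j = sl T S j * (t - T.p j) by ring, ← key]
    ring

lemma plf_self (T : Tiling) (t : ℝ) : plf T T t = t := by
  rcases le_or_gt t 0 with h | h
  · exact plf_nonpos T T h
  rcases le_or_gt (7/8) t with h8 | h8
  · exact plf_top rfl h8
  · obtain ⟨j, hj, hjt, hjt'⟩ := chain_locate T.hstd (t := t) (by rw [T.h0]; exact h.le)
      (by rw [T.htop]; exact h8)
    rw [plf_piece rfl hj hjt hjt'.le, sl_self hj]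
    ring

end A2PL
namespace A2PL

/-- The permutation of `ℝ` carrying tiling `T` onto tiling `S`. -/
def PE (T S : Tiling) (h : T.m = S.m) : Equiv.Perm ℝ where
  toFun := plf T S
  invFun := plf S T
  left_inv := fun t => by rw [plf_comp T S T h h.symm, plf_self]
  right_inv := fun t => by rw [plf_comp S T S h.symm h, plf_self]

@[simp] lemma PE_apply (T S : Tiling) (h : T.m = S.m) (t : ℝ) : PE T S h t = plf T S t := rfl

lemma PE_mul (T S R : Tiling) (h1 : T.m = S.m) (h2 : S.m = R.m) :
    PE S R h2 * PE T S h1 = PE T R (h1.trans h2) :=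
  Equiv.ext fun t => plf_comp T S R h1 h2 t

lemma PE_inv (T S : Tiling) (h : T.m = S.m) : (PE T S h)⁻¹ = PE S T h.symm := rfl

lemma plf_congr {T T' S S' : Tiling} (hT : T.m = T'.m) (hTS : T.m = S.m)
    (hTp : ∀ i, i ≤ T.m → T.p i = T'.p i) (hSp : ∀ i, i ≤ S.m → S.p i = S'.p i) :
    plf T S = plf T' S' := by
  funext t
  unfold plf sl
  rw [← hT]
  apply congrArg
  apply Finset.sum_congr rfl
  intro i hi
  have hi' := Finset.mem_range.mp hi
  rw [hTp i (by omega), hTp (i+1) (by omega), hSp i (by rw [← hTS]; omega), hSp (i+1) (by rw [← hTS]; omega)]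

lemma PE_congr {T T' S S' : Tiling} (h : T.m = S.m) (h' : T'.m = S'.m) (hT : T.m = T'.m)
    (hTp : ∀ i, i ≤ T.m → T.p i = T'.p i) (hSp : ∀ i, i ≤ S.m → S.p i = S'.p i) :
    PE T S h = PE T' S' h' :=
  Equiv.ext fun t => by
    rw [PE_apply, PE_apply, plf_congr hT h hTp hSp]

lemma PE_eq_one {T S : Tiling} (h : T.m = S.m) (hp : ∀ i, i ≤ T.m → T.p i = S.p i) :
    PE T S h = 1 := by
  apply Equiv.ext
  intro t
  rw [PE_apply, plf_congr (T' := T) (S' := T) rfl h (fun i _ => rfl)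
    (fun i hi => (hp i (by omega)).symm), plf_self]
  rfl

lemma sl_eq_zpow {T S : Tiling} (hm : T.m = S.m) {j : ℕ} (hj : j < T.m) :
    ∃ n : ℤ, sl T S j = 2 ^ n := by
  obtain ⟨k, a, hu, hv⟩ := T.hstd j hj
  obtain ⟨l, c, hu', hv'⟩ := S.hstd j (hm ▸ hj)
  refine ⟨(k : ℤ) - l, ?_⟩
  have e1 : T.p (j+1) - T.p j = 1 / 2^k := by rw [hu, hv]; ring
  have e2 : S.p (j+1) - S.p j = 1 / 2^l := by rw [hu', hv']; ring
  unfold sl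
  rw [e1, e2, zpow_sub₀ (by norm_num : (2:ℝ) ≠ 0), zpow_natCast, zpow_natCast]
  field_simp

lemma PE_isPL2 (T S : Tiling) (h : T.m = S.m) : IsPL2 (PE T S h) := by
  refine ⟨plf_cont T S, plf_strictMono h, ?_, ?_⟩
  · intro t ht
    rcases ht with ht | ht
    · exact plf_nonpos T S ht
    · exact plf_top h (by linarith)
  · refine ⟨(Finset.range (T.m+1)).image (fun i => T.p i), ?_, ?_⟩
    · intro q hq
      obtain ⟨i, hi, rfl⟩ := Finset.mem_image.mp hq
      exact T.dyadic (Nat.lt_succ_iff.mp (Finset.mem_range.mp hi))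
    · intro x hx
      have hx0 : x ≠ 0 := by
        intro hq
        apply hx
        subst hq
        exact Finset.mem_image.mpr ⟨0, Finset.mem_range.mpr (by omega), T.h0⟩
      have hx78 : x ≠ 7/8 := by
        intro hq
        apply hx
        subst hq
        exact Finset.mem_image.mpr ⟨T.m, Finset.mem_range.mpr (by omega), T.htop⟩
      rcases lt_or_ge x 0 with hneg | hpos
      · refine ⟨0, ?_⟩
        filter_upwards [Iio_mem_nhds hneg] with t ht
        rw [PE_apply, PE_apply, plf_nonpos T S (le_of_lt ht), plf_nonpos T S hneg.le]
        ring
      rcases lt_or_ge (7/8) x with hbig | hle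
      · refine ⟨0, ?_⟩
        filter_upwards [Ioi_mem_nhds hbig] with t ht
        rw [PE_apply, PE_apply, plf_top h (le_of_lt ht), plf_top h hbig.le]
        ring
      · obtain ⟨j, hj, hjt, hjt'⟩ := chain_locate T.hstd (t := x)
          (by rw [T.h0]; exact hpos) (by rw [T.htop]; exact lt_of_le_of_ne hle hx78)
        have hjx : T.p j < x := by
          rcases lt_or_eq_of_le hjt with h' | h'
          · exact h'
          · exfalso
            apply hx
            exact Finset.mem_image.mpr ⟨j, Finset.mem_range.mpr (by omega), h'⟩
        obtain ⟨n, hn⟩ := sl_eq_zpow h hj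
        refine ⟨n, ?_⟩
        filter_upwards [Ioo_mem_nhds hjx hjt'] with t ht
        rw [PE_apply, PE_apply, plf_piece h hj ht.1.le ht.2.le,
          plf_piece h hj hjx.le hjt'.le, ← hn]
        ring

lemma PE_mem_PL2below (T S : Tiling) (h : T.m = S.m) : PE T S h ∈ PL2below (7/8) :=
  ⟨PE_isPL2 T S h, fun t ht => plf_top h ht⟩

end A2PL
namespace A2PL

/-- `W` refines `T`: every endpoint of `T` is an endpoint of `W`. -/
def Refines (W T : Tiling) : Prop := ∀ i, i ≤ T.m → ∃ j, j ≤ W.m ∧ W.p j = T.p i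

lemma refines_trans {V W T : Tiling} (h1 : Refines V W) (h2 : Refines W T) : Refines V T := by
  intro i hi
  obtain ⟨j, hj, hjv⟩ := h2 i hi
  obtain ⟨j', hj', hjv'⟩ := h1 j hj
  exact ⟨j', hj', by rw [hjv', hjv]⟩

lemma tile_sub {W T : Tiling} (hR : Refines W T) {j : ℕ} (hj : j < W.m) :
    ∃ i, i < T.m ∧ T.p i ≤ W.p j ∧ W.p (j+1) ≤ T.p (i+1) := by
  have h0 : 0 ≤ W.p j := W.nonneg (by omega)
  have h8 : W.p j < 7/8 := by
    have := W.strict (Nat.lt_succ_self j) hj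
    have := W.le78 (le_refl W.m)
    have h2 := W.mono (Nat.succ_le_of_lt hj) (le_refl W.m)
    rw [W.htop] at h2
    linarith [W.strict (Nat.lt_succ_self j) hj]
  obtain ⟨i, hi, hit, hit'⟩ := chain_locate T.hstd (t := W.p j)
    (by rw [T.h0]; exact h0) (by rw [T.htop]; exact h8)
  obtain ⟨j', hj', hjv⟩ := hR (i+1) (by omega)
  have hjj : j < j' := by
    by_contra hc
    push_neg at hc
    have := W.mono hc hj.le
    rw [hjv] at this
    linarith
  refine ⟨i, hi, hit, ?_⟩
  have := W.mono (by omega : j + 1 ≤ j') hj'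
  rw [hjv] at this
  exact this

lemma exp_le_of_len {k₀ kw : ℕ} (h : (1:ℝ)/2^kw ≤ 1/2^k₀) : k₀ ≤ kw := by
  by_contra hc
  push_neg at hc
  have h2 : (2:ℝ)^kw < 2^k₀ := by
    apply pow_lt_pow_right₀ (by norm_num : (1:ℝ) < 2) hc
  have hp : (0:ℝ) < 2^kw := by positivity
  have := one_div_lt_one_div_of_lt hp h2
  linarith

lemma std_affine (k₀ d l : ℕ) (b a c : ℤ) :
    Std ((c:ℝ)/2^l + ((2:ℝ)^k₀/2^l) * ((a:ℝ)/2^(k₀+d) - (b:ℝ)/2^k₀))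
        ((c:ℝ)/2^l + ((2:ℝ)^k₀/2^l) * (((a:ℝ)+1)/2^(k₀+d) - (b:ℝ)/2^k₀)) := by
  refine ⟨d + l, (c - b)*2^d + a, ?_, ?_⟩
  · push_cast
    have h1 : (2:ℝ)^(k₀+d) = 2^k₀ * 2^d := pow_add 2 k₀ d
    have h2 : (2:ℝ)^(d+l) = 2^d * 2^l := pow_add 2 d l
    rw [h1, h2]
    field_simp
    ring
  · push_cast
    have h1 : (2:ℝ)^(k₀+d) = 2^k₀ * 2^d := pow_add 2 k₀ d
    have h2 : (2:ℝ)^(d+l) = 2^d * 2^l := pow_add 2 d l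
    rw [h1, h2]
    field_simp
    ring

/-- The image tiling of a refinement `W` of `T` under the map `plf T S`. -/
def mapT (T S W : Tiling) (h : T.m = S.m) (hR : Refines W T) : Tiling where
  m := W.m
  p := fun j => plf T S (W.p j)
  hm := W.hm
  h0 := by
    show plf T S (W.p 0) = 0
    rw [W.h0, plf_nonpos T S (le_refl 0)]
  htop := by
    show plf T S (W.p W.m) = 7/8
    rw [W.htop, plf_top h (le_refl _)]
  hstd := by
    intro j hj
    show Std (plf T S (W.p j)) (plf T S (W.p (j+1)))
    obtain ⟨i, hi, hle1, hle2⟩ := tile_sub hR hj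
    have hWj : W.p j ≤ W.p (j+1) := (W.strict (Nat.lt_succ_self j) hj).le
    obtain ⟨k₀, b, hTu, hTv⟩ := T.hstd i hi
    obtain ⟨l, c, hSu, hSv⟩ := S.hstd i (h ▸ hi)
    obtain ⟨kw, aw, hWu, hWv⟩ := W.hstd j hj
    have hk₀ : k₀ ≤ kw := by
      apply exp_le_of_len
      have e1 : W.p (j+1) - W.p j = 1/2^kw := by rw [hWu, hWv]; ring
      have e2 : T.p (i+1) - T.p i = 1/2^k₀ := by rw [hTu, hTv]; ring
      rw [← e1, ← e2]
      linarith
    obtain ⟨d, rfl⟩ : ∃ d, kw = k₀ + d := ⟨kw - k₀, by omega⟩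
    have hsl : sl T S i = 2^k₀ / 2^l := by
      unfold sl
      rw [hTu, hTv, hSu, hSv]
      have e1 : ((b:ℝ)+1)/2^k₀ - (b:ℝ)/2^k₀ = 1/2^k₀ := by ring
      have e2 : ((c:ℝ)+1)/2^l - (c:ℝ)/2^l = 1/2^l := by ring
      rw [e1, e2]
      field_simp
    rw [plf_piece h hi (le_trans hle1 hWj) hle2,
      plf_piece h hi hle1 (le_trans hWj hle2), hsl, hWu, hWv, hTu, hSu]
    exact std_affine k₀ d l b aw c

lemma mapT_refines {T S W : Tiling} (h : T.m = S.m) (hR : Refines W T) :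
    Refines (mapT T S W h hR) S := by
  intro i hi
  obtain ⟨j, hj, hjv⟩ := hR i (by omega)
  refine ⟨j, hj, ?_⟩
  show plf T S (W.p j) = S.p i
  rw [hjv, plf_value h (by omega)]

lemma plf_refine (T S W : Tiling) (h : T.m = S.m) (hR : Refines W T) :
    plf W (mapT T S W h hR) = plf T S := by
  funext t
  set V := mapT T S W h hR with hV
  rcases le_or_gt t 0 with ht | ht
  · rw [plf_nonpos W V ht, plf_nonpos T S ht]
  rcases le_or_gt (7/8) t with h8 | h8
  · rw [plf_top (T := W) (S := V) rfl h8, plf_top h h8]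
  · obtain ⟨j, hj, hjt, hjt'⟩ := chain_locate W.hstd (t := t)
      (by rw [W.h0]; exact ht.le) (by rw [W.htop]; exact h8)
    obtain ⟨i, hi, hle1, hle2⟩ := tile_sub hR hj
    have hWj : W.p j ≤ W.p (j+1) := (W.strict (Nat.lt_succ_self j) hj).le
    have eVj : V.p j = S.p i + sl T S i * (W.p j - T.p i) :=
      plf_piece h hi hle1 (le_trans hWj hle2)
    have eVj' : V.p (j+1) = S.p i + sl T S i * (W.p (j+1) - T.p i) :=
      plf_piece h hi (le_trans hle1 hWj) hle2
    have eslV : sl W V j = sl T S i := by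
      have hW := ne_of_gt (W.diff_pos hj)
      have hdiff : V.p (j+1) - V.p j = sl T S i * (W.p (j+1) - W.p j) := by
        rw [eVj, eVj']; ring
      have e0 : sl W V j = (V.p (j+1) - V.p j)/(W.p (j+1) - W.p j) := rfl
      rw [e0, hdiff, mul_div_assoc, div_self hW, mul_one]
    rw [plf_piece (T := W) (S := V) rfl hj hjt hjt'.le,
      plf_piece h hi (le_trans hle1 hjt) (le_trans hjt'.le hle2), eslV, eVj]
    ring

lemma PE_refine (T S W : Tiling) (h : T.m = S.m) (hR : Refines W T) :
    PE W (mapT T S W h hR) rfl = PE T S h :=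
  Equiv.ext fun t => congrFun (plf_refine T S W h hR) t

/-- The uniform tiling of `[0, 7/8]` at scale `2^(-K-3)`. -/
def unif (K : ℕ) : Tiling where
  m := 7 * 2^K
  p := fun i => (i:ℝ)/2^(K+3)
  hm := by have := Nat.one_le_two_pow (n := K); omega
  h0 := by norm_num
  htop := by
    have h1 : (2:ℝ)^(K+3) = 2^K * 8 := by rw [pow_add]; norm_num
    rw [h1]
    push_cast
    have h2 : (2:ℝ)^K ≠ 0 := by positivity
    field_simp
  hstd := by
    intro i _
    exact ⟨K+3, i, by push_cast; ring, by push_cast; ring⟩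

lemma unif_refines {K K' : ℕ} (h : K ≤ K') : Refines (unif K') (unif K) := by
  intro i hi
  refine ⟨i * 2^(K'-K), ?_, ?_⟩
  · show i * 2^(K'-K) ≤ 7 * 2^K'
    calc i * 2^(K'-K) ≤ 7 * 2^K * 2^(K'-K) := by
          apply Nat.mul_le_mul_right
          exact hi
    _ = 7 * 2^K' := by
          have hKK : K + (K' - K) = K' := by omega
          rw [mul_assoc, ← pow_add, hKK]
  · show ((i * 2^(K'-K) : ℕ) : ℝ)/2^(K'+3) = (i:ℝ)/2^(K+3)
    have hd : K' + 3 = (K + 3) + (K' - K) := by omega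
    rw [hd, pow_add]
    push_cast
    have h1 : (2:ℝ)^(K+3) ≠ 0 := by positivity
    have h2 : (2:ℝ)^(K'-K) ≠ 0 := by positivity
    field_simp

lemma refines_unif (T : Tiling) : ∃ K, Refines (unif K) T := by
  classical
  set g : ℕ → ℕ := fun i => if h : i < T.m then (T.hstd i h).choose else 0 with hg
  set K := (Finset.range T.m).sup g with hK
  refine ⟨K, ?_⟩
  intro i hi
  rcases Nat.lt_or_ge i T.m with h | h
  · obtain ⟨a, hu, hv⟩ := (T.hstd i h).choose_spec
    set k := (T.hstd i h).choose with hk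
    have hkK : k ≤ K := by
      rw [hK]
      have : g i = k := by rw [hg]; simp [h, hk]
      rw [← this]
      exact Finset.le_sup (Finset.mem_range.mpr h)
    have ha0 : 0 ≤ a := by
      have h1 := T.nonneg (le_of_lt h)
      rw [hu] at h1
      have h2 : (0:ℝ) < 2^k := by positivity
      by_contra hc
      push_neg at hc
      have : (a:ℝ) < 0 := by exact_mod_cast hc
      have := div_neg_of_neg_of_pos this h2
      linarith
    obtain ⟨n, rfl⟩ : ∃ n : ℕ, a = (n:ℤ) := Int.eq_ofNat_of_zero_le ha0
    refine ⟨n * 2^(K + 3 - k), ?_, ?_⟩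
    · show n * 2^(K+3-k) ≤ 7 * 2^K
      have h78 := T.le78 (le_of_lt h)
      rw [hu] at h78
      have hcast : ((n * 2^(K+3-k) : ℕ) : ℝ) ≤ ((7 * 2^K : ℕ) : ℝ) := by
        push_cast
        have h2 : (0:ℝ) < 2^k := by positivity
        have h3 : (n:ℝ) ≤ 7/8 * 2^k := by
          rw [div_le_iff₀ h2] at h78
          push_cast at h78
          linarith
        calc (n:ℝ) * 2^(K+3-k) ≤ (7/8 * 2^k) * 2^(K+3-k) := by
              apply mul_le_mul_of_nonneg_right h3 (by positivity)
        _ = 7/8 * 2^(k + (K+3-k)) := by rw [pow_add]; ring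
        _ = 7 * 2^K := by
              have hkk : k + (K+3-k) = K+3 := by omega
              rw [hkk, pow_add]
              ring
      exact_mod_cast hcast
    · show ((n * 2^(K+3-k) : ℕ) : ℝ)/2^(K+3) = T.p i
      rw [hu]
      push_cast
      have hd : K + 3 = k + (K+3-k) := by omega
      rw [hd, pow_add]
      have h1 : (2:ℝ)^k ≠ 0 := by positivity
      have h2 : (2:ℝ)^(K+3-k) ≠ 0 := by positivity
      field_simp
      simp only [Nat.add_sub_cancel_left]
  · have hi' : i = T.m := by omega
    refine ⟨7 * 2^K, le_refl _, ?_⟩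
    show ((7 * 2^K : ℕ) : ℝ)/2^(K+3) = T.p i
    rw [hi', T.htop]
    push_cast
    have h1 : (2:ℝ)^(K+3) = 2^K * 8 := by rw [pow_add]; norm_num
    rw [h1]
    have h2 : (2:ℝ)^K ≠ 0 := by positivity
    field_simp

/-- The group of all tiling-pair maps. -/
def Gamma : Subgroup (Equiv.Perm ℝ) where
  carrier := {f | ∃ T S : Tiling, ∃ h : T.m = S.m, f = PE T S h}
  one_mem' := ⟨unif 0, unif 0, rfl, (PE_eq_one rfl (fun _ _ => rfl)).symm⟩
  inv_mem' := by
    rintro f ⟨T, S, h, rfl⟩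
    exact ⟨S, T, h.symm, (PE_inv T S h).symm ▸ rfl⟩
  mul_mem' := by
    rintro f g ⟨T, S, hTS, rfl⟩ ⟨R, Q, hRQ, rfl⟩
    obtain ⟨K1, hK1⟩ := refines_unif Q
    obtain ⟨K2, hK2⟩ := refines_unif T
    set W := unif (max K1 K2) with hW
    have hQ : Refines W Q := refines_trans (unif_refines (le_max_left K1 K2)) hK1
    have hT : Refines W T := refines_trans (unif_refines (le_max_right K1 K2)) hK2
    set V1 := mapT Q R W hRQ.symm hQ with hV1
    set V2 := mapT T S W hTS hT with hV2
    refine ⟨V1, V2, rfl, ?_⟩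
    have e1 : PE T S hTS = PE W V2 rfl := (PE_refine T S W hTS hT).symm
    have e2 : PE R Q hRQ = PE V1 W rfl := by
      have := PE_refine Q R W hRQ.symm hQ
      have h3 : (PE W V1 rfl)⁻¹ = (PE Q R hRQ.symm)⁻¹ := by rw [this]
      change PE V1 W rfl = PE R Q hRQ at h3
      exact h3.symm
    rw [e1, e2, PE_mul V1 W V2 rfl rfl]
end A2PL
namespace A2PL

/-- Endpoints after splitting tile `i`. -/
def splitp (T : Tiling) (i : ℕ) : ℕ → ℝ := fun j =>
  if j ≤ i then T.p j else if j = i+1 then (T.p i + T.p (i+1))/2 else T.p (j-1)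

lemma splitp_of_le (T : Tiling) (i : ℕ) {j : ℕ} (hj : j ≤ i) : splitp T i j = T.p j :=
  if_pos hj

lemma splitp_mid (T : Tiling) (i : ℕ) : splitp T i (i+1) = (T.p i + T.p (i+1))/2 := by
  unfold splitp
  rw [if_neg (by omega), if_pos rfl]

lemma splitp_of_gt (T : Tiling) (i : ℕ) {j : ℕ} (hj : i + 1 < j) : splitp T i j = T.p (j-1) := by
  unfold splitp
  rw [if_neg (by omega), if_neg (by omega)]

lemma std_half_left {u v : ℝ} (h : Std u v) : Std u ((u+v)/2) := by
  obtain ⟨k, a, hu, hv⟩ := h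
  refine ⟨k+1, 2*a, ?_, ?_⟩
  · rw [hu, pow_succ]; push_cast; field_simp
  · rw [hu, hv, pow_succ]; push_cast; field_simp; ring

lemma std_half_right {u v : ℝ} (h : Std u v) : Std ((u+v)/2) v := by
  obtain ⟨k, a, hu, hv⟩ := h
  refine ⟨k+1, 2*a+1, ?_, ?_⟩
  · rw [hu, hv, pow_succ]; push_cast; field_simp; ring
  · rw [hv, pow_succ]; push_cast; field_simp; ring

/-- Split tile `i` of `T` in half. -/
def split (T : Tiling) (i : ℕ) (hi : i < T.m) : Tiling where
  m := T.m + 1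
  p := splitp T i
  hm := by have := T.hm; omega
  h0 := by rw [splitp_of_le T i (Nat.zero_le i), T.h0]
  htop := by
    rw [splitp_of_gt T i (by omega), Nat.add_sub_cancel, T.htop]
  hstd := by
    intro j hj
    rcases lt_trichotomy j i with h | h | h
    · rw [splitp_of_le T i (by omega), splitp_of_le T i (by omega)]
      exact T.hstd j (by omega)
    · subst h
      rw [splitp_of_le T j (le_refl j), splitp_mid T j]
      exact std_half_left (T.hstd j hi)
    · rcases Nat.eq_or_lt_of_le h with h' | h'
      · rw [← h', splitp_mid T i, splitp_of_gt T i (by omega)]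
        have e : i + 1 + 1 - 1 = i + 1 := by omega
        rw [e]
        exact std_half_right (T.hstd i hi)
      · rw [splitp_of_gt T i (by omega), splitp_of_gt T i (by omega)]
        have e : j + 1 - 1 = j - 1 + 1 := by omega
        rw [e]
        exact T.hstd (j-1) (by omega)

lemma split_m (T : Tiling) (i : ℕ) (hi : i < T.m) : (split T i hi).m = T.m + 1 := rfl

lemma split_p_of_le (T : Tiling) {i : ℕ} (hi : i < T.m) {j : ℕ} (hj : j ≤ i) :
    (split T i hi).p j = T.p j := splitp_of_le T i hj

lemma split_p_mid (T : Tiling) {i : ℕ} (hi : i < T.m) :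
    (split T i hi).p (i+1) = (T.p i + T.p (i+1))/2 := splitp_mid T i

lemma split_p_of_gt (T : Tiling) {i : ℕ} (hi : i < T.m) {j : ℕ} (hj : i + 1 < j) :
    (split T i hi).p j = T.p (j-1) := splitp_of_gt T i hj

lemma split_refines (T : Tiling) (i : ℕ) (hi : i < T.m) : Refines (split T i hi) T := by
  intro r hr
  rcases le_or_gt r i with h | h
  · exact ⟨r, by rw [split_m]; omega, split_p_of_le T hi h⟩
  · refine ⟨r+1, by rw [split_m]; omega, ?_⟩
    rw [split_p_of_gt T hi (by omega)]
    simp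

lemma split_invariance (T S : Tiling) (h : T.m = S.m) (i : ℕ) (hi : i < T.m) :
    PE (split T i hi) (split S i (h ▸ hi)) (by rw [split_m, split_m, h]) = PE T S h := by
  rw [← PE_refine T S (split T i hi) h (split_refines T i hi)]
  apply PE_congr _ _ rfl (fun r _ => rfl)
  intro r hr
  have hr' : r ≤ T.m + 1 := by
    rw [split_m] at hr
    omega
  symm
  show plf T S ((split T i hi).p r) = (split S i (h ▸ hi)).p r
  rcases le_or_gt r i with hcase | hcase
  · rw [split_p_of_le T hi hcase, split_p_of_le S (h ▸ hi) hcase, plf_value h (by omega)]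
  rcases Nat.eq_or_lt_of_le hcase with hcase' | hcase'
  · rw [← hcase', split_p_mid T hi, split_p_mid S (h ▸ hi)]
    have hd := T.diff_pos hi
    have hb1 : T.p i ≤ (T.p i + T.p (i+1))/2 := by linarith
    have hb2 : (T.p i + T.p (i+1))/2 ≤ T.p (i+1) := by linarith
    rw [plf_piece h hi hb1 hb2]
    have e1 : sl T S i * ((T.p i + T.p (i+1))/2 - T.p i) = (sl T S i * (T.p (i+1) - T.p i))/2 := by
      ring
    rw [e1, sl_mul_diff hi]
    ring
  · rw [split_p_of_gt T hi hcase', split_p_of_gt S (h ▸ hi) hcase',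
      plf_value h (by omega)]

lemma split_comm (T : Tiling) {i j : ℕ} (hij : i < j) (hj : j < T.m) (hi : i < T.m)
    (h1 : i < (split T j hj).m) (h2 : j+1 < (split T i hi).m) (r : ℕ) :
    (split (split T j hj) i h1).p r = (split (split T i hi) (j+1) h2).p r := by
  set A := split T j hj with hA
  set B := split T i hi with hB
  rcases le_or_gt r i with hc1 | hc1
  · rw [split_p_of_le A h1 hc1, split_p_of_le B h2 (by omega), hA, hB,
      split_p_of_le T hj (by omega), split_p_of_le T hi hc1]
  rcases Nat.eq_or_lt_of_le hc1 with hc2 | hc2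
  · rw [← hc2, split_p_mid A h1, split_p_of_le B h2 (by omega), hA, hB,
      split_p_of_le T hj (by omega), split_p_of_le T hj (by omega), split_p_mid T hi]
  rcases le_or_gt r (j+1) with hc3 | hc3
  · rw [split_p_of_gt A h1 hc2, split_p_of_le B h2 hc3, hA, hB,
      split_p_of_le T hj (by omega), split_p_of_gt T hi hc2]
  rcases Nat.eq_or_lt_of_le hc3 with hc4 | hc4
  · rw [← hc4, split_p_of_gt A h1 (by omega), split_p_mid B h2, hA, hB]
    have e1 : j + 2 - 1 = j + 1 := by omega
    rw [e1, split_p_mid T hj, split_p_of_gt T hi (by omega), split_p_of_gt T hi (by omega)]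
    have e2 : j + 1 - 1 = j := by omega
    have e3 : j + 2 - 1 = j + 1 := by omega
    rw [e2, e3]
  · rw [split_p_of_gt A h1 (by omega), split_p_of_gt B h2 (by omega), hA, hB,
      split_p_of_gt T hj (by omega), split_p_of_gt T hi (by omega)]

/-- The base tiling `[0,1/2],[1/2,3/4],[3/4,7/8]`. -/
def base : Tiling where
  m := 3
  p := fun i => if i = 0 then 0 else if i = 1 then 1/2 else if i = 2 then 3/4 else 7/8
  hm := le_refl 3
  h0 := rfl
  htop := by norm_num
  hstd := by
    intro i hi
    interval_cases i
    · exact ⟨1, 0, by norm_num, by norm_num⟩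
    · exact ⟨2, 2, by norm_num, by norm_num⟩
    · exact ⟨3, 6, by norm_num, by norm_num⟩

def combAux : (n : ℕ) → {T : Tiling // T.m = n + 3}
  | 0 => ⟨base, rfl⟩
  | n+1 =>
    ⟨split (combAux n).1 (n+2) (by rw [(combAux n).2]; omega),
     by rw [split_m, (combAux n).2]⟩

/-- The comb tilings: `comb n` has `n+3` tiles, obtained by repeatedly halving the last tile. -/
def comb (n : ℕ) : Tiling := (combAux n).1

lemma comb_m (n : ℕ) : (comb n).m = n + 3 := (combAux n).2

lemma comb_succ (n : ℕ) :
    comb (n+1) = split (comb n) (n+2) (by rw [comb_m]; omega) := rfl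

end A2PL
namespace A2PL

/-- The elementary generator at level `n`, position `i`. -/
def eps (n i : ℕ) (hi : i < n + 3) : Equiv.Perm ℝ :=
  PE (comb (n+1)) (split (comb n) i (by rw [comb_m]; exact hi))
    (by rw [comb_m, split_m, comb_m])

/-- The stable elementary generators. -/
def yel (i : ℕ) : Equiv.Perm ℝ := eps i i (by omega)

lemma eps_stable (n i : ℕ) (hi : i ≤ n + 1) :
    eps n i (by omega) = eps (n+1) i (by omega) := by
  have hinv := split_invariance (comb (n+1)) (split (comb n) i (by rw [comb_m]; omega))
      (by rw [comb_m, split_m, comb_m]) (n+3) (by rw [comb_m]; omega)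
  unfold eps
  rw [← hinv]
  apply PE_congr
  · rw [split_m, comb_m, comb_m]
  · intro r hr
    rfl
  · intro r hr
    exact (split_comm (comb n) (show i < n+2 by omega) (by rw [comb_m]; omega)
      (by rw [comb_m]; omega) (by rw [split_m, comb_m]; omega)
      (by rw [split_m, comb_m]; omega) r).symm

lemma eps_add (d n i : ℕ) (hi : i ≤ n + 1) :
    eps n i (by omega) = eps (n+d) i (by omega) := by
  induction d with
  | zero => rfl
  | succ e ih =>
    rw [ih]
    exact eps_stable (n+e) i (by omega)

lemma eps_eq_yel (n i : ℕ) (hi : i ≤ n + 1) : eps n i (by omega) = yel i := by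
  rcases Nat.lt_or_ge n i with h | h
  · have he : i = n + 1 := by omega
    subst he
    exact eps_stable n (n+1) (le_refl _)
  · obtain ⟨d, rfl⟩ : ∃ d, n = i + d := ⟨n - i, by omega⟩
    exact (eps_add d i i (by omega)).symm

lemma yel_rel {i j : ℕ} (hij : i < j) : yel j * yel i = yel i * yel (j+1) := by
  obtain ⟨n, rfl⟩ : ∃ n, j = n + 1 := ⟨j - 1, by omega⟩
  -- left side
  have hinvL := split_invariance (comb (n+1)) (split (comb n) (n+1) (by rw [comb_m]; omega))
      (by rw [comb_m, split_m, comb_m]) i (by rw [comb_m]; omega)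
  have hyj : yel (n+1) = PE (split (comb (n+1)) i (by rw [comb_m]; omega))
      (split (split (comb n) (n+1) (by rw [comb_m]; omega)) i
        (by rw [split_m, comb_m]; omega))
      (by rw [split_m, split_m, comb_m, split_m, comb_m]) := by
    rw [← eps_eq_yel n (n+1) (by omega)]
    unfold eps
    rw [← hinvL]
  have hyi : yel i = PE (comb (n+2)) (split (comb (n+1)) i (by rw [comb_m]; omega))
      (by rw [comb_m, split_m, comb_m]) := by
    rw [← eps_eq_yel (n+1) i (by omega)]
    rfl
  -- right side
  have hinvR := split_invariance (comb (n+1)) (split (comb n) i (by rw [comb_m]; omega))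
      (by rw [comb_m, split_m, comb_m]) (n+2) (by rw [comb_m]; omega)
  have hyi' : yel i = PE (split (comb (n+1)) (n+2) (by rw [comb_m]; omega))
      (split (split (comb n) i (by rw [comb_m]; omega)) (n+2)
        (by rw [split_m, comb_m]; omega))
      (by rw [split_m, split_m, comb_m, split_m, comb_m]) := by
    rw [← eps_eq_yel n i (by omega)]
    unfold eps
    rw [← hinvR]
  have hyj1 : yel (n+1+1) = PE (comb (n+2)) (split (comb (n+1)) (n+2) (by rw [comb_m]; omega))
      (by rw [comb_m, split_m, comb_m]) := by
    rw [← eps_eq_yel (n+1) (n+2) (by omega)]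
    rfl
  rw [hyj]
  nth_rewrite 1 [hyi]
  rw [PE_mul, hyi', hyj1, PE_mul]
  apply PE_congr
  · rfl
  · intro r hr
    rfl
  · intro r hr
    exact split_comm (comb n) (show i < n+1 by omega) (by rw [comb_m]; omega)
      (by rw [comb_m]; omega) (by rw [split_m, comb_m]; omega)
      (by rw [split_m, comb_m]; omega) r

end A2PL
namespace A2PL

lemma exp_lt_of_len {k₀ k : ℕ} (h : (1:ℝ)/2^k < 1/2^k₀) : k₀ < k := by
  by_contra hc
  push_neg at hc
  have h2 : (2:ℝ)^k ≤ 2^k₀ := pow_le_pow_right₀ (by norm_num : (1:ℝ) ≤ 2) hc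
  have hp : (0:ℝ) < 2^k := by positivity
  have := one_div_le_one_div_of_le hp h2
  linarith

lemma len_halves {u v : ℝ} (h : Std u v) {q : ℕ} (hlt : v - u < 1/2^q) :
    v - u ≤ 1/2^(q+1) := by
  obtain ⟨k, a, hu, hv⟩ := h
  have hlen : v - u = 1/2^k := by rw [hu, hv]; ring
  rw [hlen] at hlt ⊢
  have hk : q < k := exp_lt_of_len hlt
  have h2 : (2:ℝ)^(q+1) ≤ 2^k := pow_le_pow_right₀ (by norm_num : (1:ℝ) ≤ 2) (by omega)
  exact one_div_le_one_div_of_le (by positivity) h2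

lemma tile_start_eq {u v : ℝ} (hstd : Std u v) {q : ℕ} {e : ℤ}
    (hlen : v - u ≤ 1/2^q) (h1 : u ≤ (e:ℝ)/2^q) (h2 : ((e:ℝ))/2^q < v) :
    u = (e:ℝ)/2^q := by
  obtain ⟨k, a, hu, hv⟩ := hstd
  have hlenk : v - u = 1/2^k := by rw [hu, hv]; ring
  have hqk : q ≤ k := exp_le_of_len (by rw [← hlenk]; exact hlen)
  obtain ⟨d, rfl⟩ : ∃ d, k = q + d := ⟨k - q, by omega⟩
  have hc : ((e:ℝ))/2^q = ((e * 2^d : ℤ):ℝ)/2^(q+d) := by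
    push_cast
    rw [pow_add]
    have h1' : (2:ℝ)^q ≠ 0 := by positivity
    have h2' : (2:ℝ)^d ≠ 0 := by positivity
    field_simp
  have h2k : (0:ℝ) < 2^(q+d) := by positivity
  have hA : a ≤ e * 2^d := by
    have hr : (a:ℝ)/2^(q+d) ≤ ((e * 2^d : ℤ):ℝ)/2^(q+d) := by rw [← hc, ← hu]; exact h1
    have := mul_le_mul_of_nonneg_right hr h2k.le
    rw [div_mul_cancel₀ _ (ne_of_gt h2k), div_mul_cancel₀ _ (ne_of_gt h2k)] at this
    exact_mod_cast this
  have hB : e * 2^d < a + 1 := by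
    have hr : ((e * 2^d : ℤ):ℝ)/2^(q+d) < ((a:ℝ)+1)/2^(q+d) := by rw [← hc, ← hv]; exact h2
    have := mul_lt_mul_of_pos_right hr h2k
    rw [div_mul_cancel₀ _ (ne_of_gt h2k), div_mul_cancel₀ _ (ne_of_gt h2k)] at this
    have : ((e * 2^d : ℤ):ℝ) < ((a + 1 : ℤ):ℝ) := by push_cast; push_cast at this; linarith
    exact_mod_cast this
  have hEq : a = e * 2^d := by omega
  rw [hu, hEq, hc]

/-- Any chain of ≥2 standard intervals tiling a standard interval contains an
adjacent sibling pair. -/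
lemma sib_seg : ∀ m : ℕ, 2 ≤ m → ∀ (p : ℕ → ℝ) (k₀ : ℕ) (b : ℤ),
    (∀ i, i < m → Std (p i) (p (i+1))) → p 0 = (b:ℝ)/2^k₀ → p m = ((b:ℝ)+1)/2^k₀ →
    ∃ i, i + 2 ≤ m ∧ ∃ (k : ℕ) (a : ℤ), p i = (a:ℝ)/2^k ∧
      p (i+1) = (2*(a:ℝ)+1)/2^(k+1) ∧ p (i+2) = ((a:ℝ)+1)/2^k := by
  intro m
  induction m using Nat.strong_induction_on with
  | _ m IH =>
  intro hm p k₀ b hstd h0 hmv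
  set c : ℝ := (2*(b:ℝ)+1)/2^(k₀+1) with hcdef
  have hgap : (0:ℝ) < 1/2^(k₀+1) := by positivity
  have hhalf : (1:ℝ)/2^(k₀+1) + 1/2^(k₀+1) = 1/2^k₀ := by
    rw [pow_succ]
    have h2 : (2:ℝ)^k₀ ≠ 0 := by positivity
    field_simp
    ring
  have hc0 : c - p 0 = 1/2^(k₀+1) := by
    rw [h0, hcdef, pow_succ]
    have : (2:ℝ)^k₀ ≠ 0 := by positivity
    field_simp
    ring
  have hcm : p m - c = 1/2^(k₀+1) := by
    rw [hmv, hcdef, pow_succ]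
    have : (2:ℝ)^k₀ ≠ 0 := by positivity
    field_simp
    ring
  obtain ⟨j, hj, hjt, hjt'⟩ := chain_locate hstd (t := c) (by linarith) (by linarith)
  have hcast : ((2*b+1 : ℤ):ℝ)/2^(k₀+1) = c := by rw [hcdef]; push_cast; ring
  have hlen_lt : p (j+1) - p j < 1/2^k₀ := by
    have htot : p m - p 0 = 1/2^k₀ := by linarith
    rcases Nat.eq_zero_or_pos j with rfl | hjpos
    · have : p 1 < p m := chain_strict hstd (by omega) (le_refl m)
      linarith
    · have h1 : p 0 < p j := chain_strict hstd hjpos (by omega)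
      have h2 : p (j+1) ≤ p m := chain_mono hstd (by omega) (le_refl m)
      linarith
  have hlen : p (j+1) - p j ≤ 1/2^(k₀+1) := len_halves (hstd j hj) hlen_lt
  have hpj : p j = c := by
    have := tile_start_eq (hstd j hj) (q := k₀+1) (e := 2*b+1) hlen
      (by rw [hcast]; exact hjt) (by rw [hcast]; exact hjt')
    rw [this, hcast]
  have hj1 : 1 ≤ j := by
    rcases Nat.eq_zero_or_pos j with rfl | h
    · exfalso
      have h0' : c - p 0 = 0 := by rw [hpj]; ring
      linarith
    · exact h
  rcases Nat.lt_or_ge j 2 with hj2 | hj2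
  · -- j = 1
    have hj1' : j = 1 := by omega
    subst hj1'
    rcases Nat.lt_or_ge m 3 with hm3 | hm3
    · -- m = 2 : the two tiles are siblings
      have hm2 : m = 2 := by omega
      refine ⟨0, by omega, k₀, b, h0, ?_, ?_⟩
      · show p 1 = _
        rw [hpj, hcdef]
      · show p 2 = _
        have e : p 2 = p m := by rw [hm2]
        rw [e, hmv]
    · -- recurse on the right segment
      have hres := IH (m - 1) (by omega) (by omega) (fun r => p (r + 1)) (k₀+1) (2*b+1)
        (by
          intro i hi
          show Std (p (i+1)) (p (i+1+1))
          exact hstd (i+1) (by omega))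
        (by
          show p 1 = ((2*b+1 : ℤ):ℝ)/2^(k₀+1)
          rw [hpj, hcast])
        (by
          show p (m-1+1) = _
          have e1 : m - 1 + 1 = m := by omega
          rw [e1, hmv]
          push_cast
          rw [div_eq_div_iff (by positivity) (by positivity), pow_succ]
          ring)
      obtain ⟨i, hile, k, a, e1, e2, e3⟩ := hres
      refine ⟨i + 1, by omega, k, a, e1, e2, ?_⟩
      have e4 : i + 1 + 2 = i + 2 + 1 := by omega
      rw [e4]
      exact e3
  · -- recurse on the left segment
    have hres := IH j (by omega) (by omega) p (k₀+1) (2*b)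
      (fun i hi => hstd i (by omega))
      (by
        rw [h0]
        push_cast
        rw [div_eq_div_iff (by positivity) (by positivity), pow_succ]
        ring)
      (by
        rw [hpj, hcdef]
        push_cast
        ring)
    obtain ⟨i, hile, k, a, e1, e2, e3⟩ := hres
    exact ⟨i, by omega, k, a, e1, e2, e3⟩

end A2PL
namespace A2PL

lemma half_endpoints (T : Tiling) :
    ∃ j1 j2, 1 ≤ j1 ∧ j1 < j2 ∧ j2 < T.m ∧ T.p j1 = 1/2 ∧ T.p j2 = 3/4 := by
  -- endpoint 1/2
  obtain ⟨j1, hj1, hjt1, hjt1'⟩ := chain_locate T.hstd (t := (1:ℝ)/2)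
    (by rw [T.h0]; norm_num) (by rw [T.htop]; norm_num)
  have hc1 : ((1 : ℤ):ℝ)/2^1 = 1/2 := by norm_num
  have hlen1 : T.p (j1+1) - T.p j1 ≤ 1/2^1 := by
    apply len_halves (T.hstd j1 hj1)
    have h1 : 0 ≤ T.p j1 := T.nonneg (by omega)
    have h2 := T.le78 (show j1 + 1 ≤ T.m by omega)
    norm_num
    linarith
  have hpj1 : T.p j1 = 1/2 := by
    have := tile_start_eq (T.hstd j1 hj1) (q := 1) (e := 1) hlen1
      (by rw [hc1]; exact hjt1) (by rw [hc1]; exact hjt1')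
    rw [this, hc1]
  have hj1pos : 1 ≤ j1 := by
    rcases Nat.eq_zero_or_pos j1 with rfl | h
    · exfalso
      rw [T.h0] at hpj1
      norm_num at hpj1
    · exact h
  -- endpoint 3/4
  obtain ⟨j2, hj2, hjt2, hjt2'⟩ := chain_locate T.hstd (t := (3:ℝ)/4)
    (by rw [T.h0]; norm_num) (by rw [T.htop]; norm_num)
  have hc2 : ((3 : ℤ):ℝ)/2^2 = 3/4 := by norm_num
  have hge : 1/2 ≤ T.p j2 := by
    by_contra hc
    push_neg at hc
    have hlt : j2 < j1 := by
      by_contra hc'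
      push_neg at hc'
      have := T.mono hc' (by omega)
      linarith
    have := T.mono (show j2 + 1 ≤ j1 by omega) (by omega)
    rw [hpj1] at this
    linarith
  have hlen2 : T.p (j2+1) - T.p j2 ≤ 1/2^2 := by
    have h1 : T.p (j2+1) - T.p j2 ≤ 1/2^1 := by
      apply len_halves (T.hstd j2 hj2)
      have h2 := T.le78 (show j2 + 1 ≤ T.m by omega)
      norm_num
      linarith
    apply len_halves (T.hstd j2 hj2)
    have h2 := T.le78 (show j2 + 1 ≤ T.m by omega)
    norm_num
    linarith
  have hpj2 : T.p j2 = 3/4 := by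
    have := tile_start_eq (T.hstd j2 hj2) (q := 2) (e := 3) hlen2
      (by rw [hc2]; exact hjt2) (by rw [hc2]; exact hjt2')
    rw [this, hc2]
  have hj12 : j1 < j2 := by
    by_contra hc
    push_neg at hc
    have := T.mono hc (by omega)
    rw [hpj1, hpj2] at this
    linarith
  exact ⟨j1, j2, hj1pos, hj12, hj2, hpj1, hpj2⟩

lemma comb_zero_p (r : ℕ) :
    (comb 0).p r = if r = 0 then 0 else if r = 1 then 1/2 else if r = 2 then 3/4 else 7/8 := rfl

lemma size_three_unique (T : Tiling) (h3 : T.m = 3) :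
    ∀ r, r ≤ T.m → T.p r = (comb 0).p r := by
  obtain ⟨j1, j2, h1, h12, h2m, hp1, hp2⟩ := half_endpoints T
  rw [h3] at h2m
  have hj1 : j1 = 1 := by omega
  have hj2 : j2 = 2 := by omega
  subst hj1 hj2
  intro r hr
  rw [h3] at hr
  rw [comb_zero_p]
  interval_cases r
  · simpa using T.h0
  · simpa using hp1
  · simpa using hp2
  · simp only [if_neg (by omega : ¬(3 = 0)), if_neg (by omega : ¬(3 = 1)),
      if_neg (by omega : ¬(3 = 2))]
    rw [← h3, T.htop]

/-- Endpoints after merging the sibling pair at `i,i+1`. -/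
def mergep (T : Tiling) (i : ℕ) : ℕ → ℝ := fun r => if r ≤ i then T.p r else T.p (r+1)

lemma mergep_of_le (T : Tiling) (i : ℕ) {r : ℕ} (h : r ≤ i) : mergep T i r = T.p r :=
  if_pos h

lemma mergep_of_gt (T : Tiling) (i : ℕ) {r : ℕ} (h : i < r) : mergep T i r = T.p (r+1) :=
  if_neg (by omega)

/-- The merged tiling. -/
def merge (T : Tiling) (i : ℕ) (hi2 : i + 2 ≤ T.m) (hm4 : 4 ≤ T.m)
    (hstd2 : Std (T.p i) (T.p (i+2))) : Tiling where
  m := T.m - 1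
  p := mergep T i
  hm := by omega
  h0 := by rw [mergep_of_le T i (Nat.zero_le i), T.h0]
  htop := by
    rw [mergep_of_gt T i (by omega : i < T.m - 1)]
    have e : T.m - 1 + 1 = T.m := by omega
    rw [e, T.htop]
  hstd := by
    intro r hr
    rcases lt_trichotomy r i with h | h | h
    · rw [mergep_of_le T i (by omega : r ≤ i), mergep_of_le T i (by omega : r + 1 ≤ i)]
      exact T.hstd r (by omega)
    · subst h
      rw [mergep_of_le T r (le_refl r), mergep_of_gt T r (by omega : r < r + 1)]
      exact hstd2
    · rw [mergep_of_gt T i h, mergep_of_gt T i (by omega : i < r + 1)]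
      exact T.hstd (r+1) (by omega)

/-- Main merge lemma: every tiling with at least 4 tiles is a split of a smaller tiling. -/
lemma tiling_sibling (T : Tiling) (hm4 : 4 ≤ T.m) :
    ∃ (S : Tiling) (i : ℕ) (hi : i < S.m), S.m = T.m - 1 ∧
      ∀ r, r ≤ T.m → (split S i hi).p r = T.p r := by
  obtain ⟨j1, j2, hj1pos, hj12, hj2m, hpj1, hpj2⟩ := half_endpoints T
  have hsib : ∃ i, i + 2 ≤ T.m ∧ ∃ (k : ℕ) (a : ℤ), T.p i = (a:ℝ)/2^k ∧
      T.p (i+1) = (2*(a:ℝ)+1)/2^(k+1) ∧ T.p (i+2) = ((a:ℝ)+1)/2^k := by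
    have hcases : 2 ≤ j1 ∨ 2 ≤ j2 - j1 ∨ 2 ≤ T.m - j2 := by omega
    rcases hcases with hc | hc | hc
    · obtain ⟨i, hile, k, a, e1, e2, e3⟩ := sib_seg j1 hc T.p 1 0
        (fun r hr => T.hstd r (by omega))
        (by rw [T.h0]; norm_num) (by rw [hpj1]; norm_num)
      exact ⟨i, by omega, k, a, e1, e2, e3⟩
    · obtain ⟨i, hile, k, a, e1, e2, e3⟩ := sib_seg (j2 - j1) hc (fun r => T.p (r + j1)) 2 2
        (by
          intro r hr
          show Std (T.p (r + j1)) (T.p (r + 1 + j1))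
          have e : r + 1 + j1 = r + j1 + 1 := by omega
          rw [e]
          exact T.hstd (r + j1) (by omega))
        (by
          show T.p (0 + j1) = ((2 : ℤ):ℝ)/2^2
          have e : 0 + j1 = j1 := by omega
          rw [e, hpj1]
          norm_num)
        (by
          show T.p (j2 - j1 + j1) = _
          have e : j2 - j1 + j1 = j2 := by omega
          rw [e, hpj2]
          norm_num)
      refine ⟨i + j1, by omega, k, a, e1, ?_, ?_⟩
      · have e : i + j1 + 1 = i + 1 + j1 := by omega
        rw [e]; exact e2
      · have e : i + j1 + 2 = i + 2 + j1 := by omega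
        rw [e]; exact e3
    · obtain ⟨i, hile, k, a, e1, e2, e3⟩ := sib_seg (T.m - j2) hc (fun r => T.p (r + j2)) 3 6
        (by
          intro r hr
          show Std (T.p (r + j2)) (T.p (r + 1 + j2))
          have e : r + 1 + j2 = r + j2 + 1 := by omega
          rw [e]
          exact T.hstd (r + j2) (by omega))
        (by
          show T.p (0 + j2) = ((6 : ℤ):ℝ)/2^3
          have e : 0 + j2 = j2 := by omega
          rw [e, hpj2]
          norm_num)
        (by
          show T.p (T.m - j2 + j2) = _
          have e : T.m - j2 + j2 = T.m := by omega
          rw [e, T.htop]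
          norm_num)
      refine ⟨i + j2, by omega, k, a, e1, ?_, ?_⟩
      · have e : i + j2 + 1 = i + 1 + j2 := by omega
        rw [e]; exact e2
      · have e : i + j2 + 2 = i + 2 + j2 := by omega
        rw [e]; exact e3
  obtain ⟨i, hi2, k, a, ha1, ha2, ha3⟩ := hsib
  set S : Tiling := merge T i hi2 hm4 ⟨k, a, ha1, ha3⟩ with hSdef
  have hiS : i < S.m := by show i < T.m - 1; omega
  refine ⟨S, i, hiS, rfl, ?_⟩
  intro r hr
  rcases le_or_gt r i with hc | hc
  · rw [split_p_of_le S hiS hc]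
    show mergep T i r = T.p r
    rw [mergep_of_le T i hc]
  rcases Nat.eq_or_lt_of_le hc with hc' | hc'
  · rw [← hc', split_p_mid S hiS]
    have e1 : S.p i = T.p i := mergep_of_le T i (le_refl i)
    have e2 : S.p (i+1) = T.p (i+2) := mergep_of_gt T i (by omega)
    rw [e1, e2, ha1, ha3, ha2, pow_succ]
    have h2 : (2:ℝ)^k ≠ 0 := by positivity
    field_simp
    ring
  · rw [split_p_of_gt S hiS hc']
    show mergep T i (r-1) = T.p r
    rw [mergep_of_gt T i (by omega)]
    congr 1
    omega

end A2PL
namespace A2PL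

/-- The tiling-pair form of `x₀x₁⁻¹`. -/
def gE1 : Equiv.Perm ℝ :=
  PE (split (comb 0) 1 (by rw [comb_m]; omega)) (split (comb 0) 0 (by rw [comb_m]; omega)) rfl

/-- The tiling-pair form of `x₀x₂⁻¹`. -/
def gE2 : Equiv.Perm ℝ := yel 0

/-- The subgroup generated by the two tiling-pair generators. -/
def Hgen : Subgroup (Equiv.Perm ℝ) := Subgroup.closure {gE1, gE2}

lemma gE1_mem : gE1 ∈ Hgen := Subgroup.subset_closure (by left; rfl)

lemma gE2_mem : gE2 ∈ Hgen := Subgroup.subset_closure (by right; rfl)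

lemma yel_zero : yel 0 = PE (comb 1) (split (comb 0) 0 (by rw [comb_m]; omega))
    (by rw [comb_m, split_m, comb_m]) := rfl

lemma yel_one : yel 1 = PE (comb 1) (split (comb 0) 1 (by rw [comb_m]; omega))
    (by rw [comb_m, split_m, comb_m]) := by
  rw [← eps_eq_yel 0 1 (by omega)]
  rfl

lemma gE1_eq : gE1 = yel 0 * (yel 1)⁻¹ := by
  rw [yel_zero, yel_one, PE_inv, PE_mul]
  rfl

lemma yel_mem : ∀ i, yel i ∈ Hgen := by
  intro i
  induction i using Nat.strong_induction_on with
  | _ i IH =>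
  match i, IH with
  | 0, _ => exact gE2_mem
  | 1, IH =>
    have h0 : yel 0 ∈ Hgen := IH 0 (by omega)
    have he : yel 1 = gE1⁻¹ * yel 0 := by
      rw [gE1_eq]
      group
    rw [he]
    exact Subgroup.mul_mem _ (Subgroup.inv_mem _ gE1_mem) h0
  | (k+2), IH =>
    have h0 : yel 0 ∈ Hgen := IH 0 (by omega)
    have hk : yel (k+1) ∈ Hgen := IH (k+1) (by omega)
    have hrel := yel_rel (show 0 < k + 1 by omega)
    have he : yel (k+2) = (yel 0)⁻¹ * (yel (k+1) * yel 0) := by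
      show yel (k+1+1) = (yel 0)⁻¹ * (yel (k+1) * yel 0)
      rw [hrel]
      group
    rw [he]
    exact Subgroup.mul_mem _ (Subgroup.inv_mem _ h0) (Subgroup.mul_mem _ hk h0)

lemma phi_mem (n : ℕ) : ∀ (T : Tiling) (hT : T.m = n + 3),
    PE (comb n) T (by rw [comb_m, hT]) ∈ Hgen := by
  induction n with
  | zero =>
    intro T hT
    have h1 : PE (comb 0) T (by rw [comb_m, hT]) = 1 := by
      apply PE_eq_one
      intro r hr
      have := size_three_unique T hT r (by rw [hT]; rw [comb_m] at hr; omega)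
      exact this.symm
    rw [h1]
    exact Subgroup.one_mem _
  | succ n IHn =>
    intro T hT
    obtain ⟨S, i, hi, hSm, hvals⟩ := tiling_sibling T (by omega)
    have hSm' : S.m = n + 3 := by omega
    have hicomb : i < (comb n).m := by rw [comb_m]; omega
    have hcm : (comb n).m = S.m := by rw [comb_m, hSm']
    -- replace T by split S i
    have E1 : PE (comb (n+1)) T (by rw [comb_m, hT]) =
        PE (comb (n+1)) (split S i hi) (by rw [comb_m, split_m, hSm'] ) := by
      apply PE_congr _ _ rfl (fun r _ => rfl)
      intro r hr
      have hr' : r ≤ T.m := by rw [hT] at hr ⊢; exact hr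
      exact (hvals r hr').symm
    rw [E1]
    -- factor through X := split (comb n) i
    have E2 : PE (comb (n+1)) (split S i hi) (by rw [comb_m, split_m, hSm']) =
        PE (split (comb n) i hicomb) (split S i hi) (by rw [split_m, split_m, hcm]) *
        PE (comb (n+1)) (split (comb n) i hicomb) (by rw [comb_m, split_m, comb_m]) := by
      rw [PE_mul]
    rw [E2]
    apply Subgroup.mul_mem
    · -- equals PE (comb n) S via split invariance
      have := split_invariance (comb n) S hcm i hicomb
      have h3 : PE (split (comb n) i hicomb) (split S i hi)
          (by rw [split_m, split_m, hcm]) = PE (comb n) S hcm := this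
      rw [h3]
      exact IHn S hSm'
    · -- elementary generator
      rcases Nat.lt_or_ge i (n+2) with hc | hc
      · have : PE (comb (n+1)) (split (comb n) i hicomb) (by rw [comb_m, split_m, comb_m]) =
            yel i := eps_eq_yel n i (by omega)
        rw [this]
        exact yel_mem i
      · have hieq : i = n + 2 := by
          have := hi
          rw [hSm'] at this
          omega
        subst hieq
        have h1 : PE (comb (n+1)) (split (comb n) (n+2) hicomb)
            (by rw [comb_m, split_m, comb_m]) = 1 := by
          apply PE_eq_one
          intro r hr
          rfl
        rw [h1]
        exact Subgroup.one_mem _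

lemma gamma_le_Hgen : (Gamma : Set (Equiv.Perm ℝ)) ⊆ (Hgen : Set (Equiv.Perm ℝ)) := by
  rintro f ⟨T, S, h, rfl⟩
  have hT : T.m = (T.m - 3) + 3 := by have := T.hm; omega
  have hS : S.m = (T.m - 3) + 3 := by rw [← h]; exact hT
  have key : PE T S h = PE (comb (T.m - 3)) S (by rw [comb_m, ← hS]) *
      (PE (comb (T.m - 3)) T (by rw [comb_m, ← hT]))⁻¹ := by
    rw [PE_inv, PE_mul]
  rw [key]
  exact Subgroup.mul_mem _ (phi_mem (T.m - 3) S hS) (Subgroup.inv_mem _ (phi_mem (T.m - 3) T hT))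

end A2PL
namespace A2PL

lemma x0fun_nonpos {t : ℝ} (h : t ≤ 0) : x0fun t = t := by
  unfold x0fun
  rcases lt_or_eq_of_le h with h' | h'
  · rw [if_pos h']
  · subst h'
    norm_num

lemma x0fun_p1 {t : ℝ} (h0 : 0 ≤ t) (h : t ≤ 1/2) : x0fun t = t/2 := by
  unfold x0fun
  rw [if_neg (by linarith), if_pos h]

lemma x0fun_p2 {t : ℝ} (h0 : 1/2 < t) (h : t ≤ 3/4) : x0fun t = t - 1/4 := by
  unfold x0fun
  rw [if_neg (by linarith), if_neg (by linarith), if_pos h]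

lemma x0fun_p3 {t : ℝ} (h0 : 3/4 < t) (h : t ≤ 1) : x0fun t = 2*t - 1 := by
  unfold x0fun
  rw [if_neg (by linarith), if_neg (by linarith), if_neg (by linarith), if_pos h]

lemma x0fun_top {t : ℝ} (h : 1 < t) : x0fun t = t := by
  unfold x0fun
  rw [if_neg (by linarith), if_neg (by linarith), if_neg (by linarith), if_neg (by linarith)]

lemma xkfun1_eq (t : ℝ) : xkfun 1 t =
    if t ≤ 1/2 then t else if t ≤ 1 then 1/2 + (1/2) * x0fun (2*(t - 1/2)) else t := by
  unfold xkfun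
  norm_num

lemma xkfun2_eq (t : ℝ) : xkfun 2 t =
    if t ≤ 3/4 then t else if t ≤ 1 then 3/4 + (1/4) * x0fun (4*(t - 3/4)) else t := by
  unfold xkfun
  norm_num

/-- source tiling of `gE1` : endpoints 0, 1/2, 5/8, 3/4, 7/8 -/
def TA : Tiling := split (comb 0) 1 (by rw [comb_m]; omega)

/-- target tiling of both generators : endpoints 0, 1/4, 1/2, 3/4, 7/8 -/
def TB : Tiling := split (comb 0) 0 (by rw [comb_m]; omega)

lemma gE1_def : gE1 = PE TA TB rfl := rfl

lemma gE2_def : gE2 = PE (comb 1) TB rfl := rfl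

lemma TA_p0 : TA.p 0 = 0 := by
  show (split (comb 0) 1 _).p 0 = 0
  rw [split_p_of_le _ _ (by omega)]
  rfl

lemma TA_p1 : TA.p 1 = 1/2 := by
  show (split (comb 0) 1 _).p 1 = 1/2
  rw [split_p_of_le _ _ (by omega), comb_zero_p]
  norm_num

lemma TA_p2 : TA.p 2 = 5/8 := by
  show (split (comb 0) 1 _).p (1+1) = 5/8
  rw [split_p_mid, comb_zero_p, comb_zero_p]
  norm_num

lemma TA_p3 : TA.p 3 = 3/4 := by
  show (split (comb 0) 1 _).p 3 = 3/4
  rw [split_p_of_gt _ _ (by omega), comb_zero_p]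
  norm_num

lemma TA_p4 : TA.p 4 = 7/8 := by
  show (split (comb 0) 1 _).p 4 = 7/8
  rw [split_p_of_gt _ _ (by omega), comb_zero_p]
  norm_num

lemma TB_p0 : TB.p 0 = 0 := by
  show (split (comb 0) 0 _).p 0 = 0
  rw [split_p_of_le _ _ (by omega)]
  rfl

lemma TB_p1 : TB.p 1 = 1/4 := by
  show (split (comb 0) 0 _).p (0+1) = 1/4
  rw [split_p_mid, comb_zero_p, comb_zero_p]
  norm_num

lemma TB_p2 : TB.p 2 = 1/2 := by
  show (split (comb 0) 0 _).p 2 = 1/2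
  rw [split_p_of_gt _ _ (by omega), comb_zero_p]
  norm_num

lemma TB_p3 : TB.p 3 = 3/4 := by
  show (split (comb 0) 0 _).p 3 = 3/4
  rw [split_p_of_gt _ _ (by omega), comb_zero_p]
  norm_num

lemma TB_p4 : TB.p 4 = 7/8 := by
  show (split (comb 0) 0 _).p 4 = 7/8
  rw [split_p_of_gt _ _ (by omega), comb_zero_p]
  norm_num

lemma C1_p0 : (comb 1).p 0 = 0 := by
  rw [comb_succ 0, split_p_of_le _ _ (by omega)]
  rfl

lemma C1_p1 : (comb 1).p 1 = 1/2 := by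
  rw [comb_succ 0, split_p_of_le _ _ (by omega), comb_zero_p]
  norm_num

lemma C1_p2 : (comb 1).p 2 = 3/4 := by
  rw [comb_succ 0, split_p_of_le _ _ (by omega), comb_zero_p]
  norm_num

lemma C1_p3 : (comb 1).p 3 = 13/16 := by
  rw [comb_succ 0]
  show (split (comb 0) 2 _).p (2+1) = 13/16
  rw [split_p_mid, comb_zero_p, comb_zero_p]
  norm_num

lemma C1_p4 : (comb 1).p 4 = 7/8 := by
  rw [comb_succ 0, split_p_of_gt _ _ (by omega), comb_zero_p]
  norm_num

lemma plf_piece_eval {T S : Tiling} (hm : T.m = S.m) {j : ℕ} (hj : j < T.m)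
    {pa pb qa qb v : ℝ} (hTa : T.p j = pa) (hTb : T.p (j+1) = pb) (hSa : S.p j = qa)
    (hSb : S.p (j+1) = qb) (h1 : pa ≤ v) (h2 : v ≤ pb) :
    plf T S v = qa + (qb - qa)/(pb - pa) * (v - pa) := by
  rw [plf_piece hm hj (by rw [hTa]; exact h1) (by rw [hTb]; exact h2), hSa, hTa]
  unfold sl
  rw [hTa, hTb, hSa, hSb]

lemma TA_m : TA.m = 4 := rfl
lemma TB_m : TB.m = 4 := rfl
lemma C1_m : (comb 1).m = 4 := rfl

/-- `x₀ = (x₀x₁⁻¹) ∘ x₁` in tiling-pair form. -/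
lemma main_id1 (t : ℝ) : x0fun t = plf TA TB (xkfun 1 t) := by
  rw [xkfun1_eq]
  rcases le_or_gt t 0 with h | h
  · rw [if_pos (by linarith : t ≤ 1/2), x0fun_nonpos h, plf_nonpos _ _ h]
  rcases le_or_gt t (1/2) with h1 | h1
  · rw [if_pos h1, x0fun_p1 h.le h1,
      plf_piece_eval (T := TA) (S := TB) rfl (by rw [TA_m]; omega) TA_p0 TA_p1 TB_p0 TB_p1 h.le h1]
    ring
  rcases le_or_gt t (3/4) with h2 | h2
  · rw [if_neg (by linarith), if_pos (by linarith), x0fun_p2 h1 h2,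
      x0fun_p1 (by linarith) (by linarith)]
    rw [plf_piece_eval (T := TA) (S := TB) rfl (by rw [TA_m]; omega) TA_p1 TA_p2 TB_p1 TB_p2
      (by linarith) (by linarith)]
    ring
  rcases le_or_gt t (7/8) with h3 | h3
  · rw [if_neg (by linarith), if_pos (by linarith), x0fun_p3 h2 (by linarith),
      x0fun_p2 (by linarith) (by linarith)]
    rw [plf_piece_eval (T := TA) (S := TB) rfl (by rw [TA_m]; omega) TA_p2 TA_p3 TB_p2 TB_p3
      (by linarith) (by linarith)]
    ring
  rcases le_or_gt t 1 with h4 | h4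
  · rw [if_neg (by linarith), if_pos h4, x0fun_p3 (by linarith) h4,
      x0fun_p3 (by linarith) (by linarith)]
    rcases le_or_gt (1/2 + 1/2 * (2 * (2*(t - 1/2)) - 1)) (7/8) with h5 | h5
    · rw [plf_piece_eval (T := TA) (S := TB) rfl (by rw [TA_m]; omega) TA_p3 TA_p4 TB_p3 TB_p4
        (by linarith) (by linarith)]
      ring
    · rw [plf_top (T := TA) (S := TB) rfl (by linarith)]
      ring
  · rw [if_neg (by linarith), if_neg (by linarith), x0fun_top h4,
      plf_top (T := TA) (S := TB) rfl (by linarith)]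

/-- `x₀ = (x₀x₂⁻¹) ∘ x₂` in tiling-pair form. -/
lemma main_id2 (t : ℝ) : x0fun t = plf (comb 1) TB (xkfun 2 t) := by
  rw [xkfun2_eq]
  rcases le_or_gt t 0 with h | h
  · rw [if_pos (by linarith : t ≤ 3/4), x0fun_nonpos h, plf_nonpos _ _ h]
  rcases le_or_gt t (1/2) with h1 | h1
  · rw [if_pos (by linarith), x0fun_p1 h.le h1,
      plf_piece_eval (T := comb 1) (S := TB) rfl (by rw [C1_m]; omega) C1_p0 C1_p1 TB_p0 TB_p1
        h.le h1]
    ring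
  rcases le_or_gt t (3/4) with h2 | h2
  · rw [if_pos h2, x0fun_p2 h1 h2,
      plf_piece_eval (T := comb 1) (S := TB) rfl (by rw [C1_m]; omega) C1_p1 C1_p2 TB_p1 TB_p2
        (by linarith) h2]
    ring
  rcases le_or_gt t (7/8) with h3 | h3
  · rw [if_neg (by linarith), if_pos (by linarith), x0fun_p3 h2 (by linarith),
      x0fun_p1 (by linarith) (by linarith)]
    rw [plf_piece_eval (T := comb 1) (S := TB) rfl (by rw [C1_m]; omega) C1_p2 C1_p3 TB_p2 TB_p3
      (by linarith) (by linarith)]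
    ring
  rcases le_or_gt t (15/16) with h4 | h4
  · rw [if_neg (by linarith), if_pos (by linarith), x0fun_p3 (by linarith) (by linarith),
      x0fun_p2 (by linarith) (by linarith)]
    rw [plf_piece_eval (T := comb 1) (S := TB) rfl (by rw [C1_m]; omega) C1_p3 C1_p4 TB_p3 TB_p4
      (by linarith) (by linarith)]
    ring
  rcases le_or_gt t 1 with h5 | h5
  · rw [if_neg (by linarith), if_pos h5, x0fun_p3 (by linarith) h5,
      x0fun_p3 (by linarith) (by linarith)]
    rw [plf_top (T := comb 1) (S := TB) rfl (by linarith)]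
    ring
  · rw [if_neg (by linarith), if_neg (by linarith), x0fun_top h5,
      plf_top (T := comb 1) (S := TB) rfl (by linarith)]

end A2PL
namespace A2PL

open Filter Topology

lemma affine_coeffs {c₁ d₁ c₂ d₂ x : ℝ}
    (h : ∀ᶠ s in nhds x, c₁ + d₁ * s = c₂ + d₂ * s) : d₁ = d₂ ∧ c₁ = c₂ := by
  have hx : c₁ + d₁ * x = c₂ + d₂ * x := h.self_of_nhds
  have h2 : ∀ᶠ y in nhdsWithin x {x}ᶜ, c₁ + d₁ * y = c₂ + d₂ * y :=
    h.filter_mono nhdsWithin_le_nhds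
  obtain ⟨y, hy, hyx⟩ := (h2.and eventually_mem_nhdsWithin).exists
  have hxy : y ≠ x := hyx
  have hd : d₁ = d₂ := by
    have h3 : (d₁ - d₂) * (y - x) = 0 := by linarith
    rcases mul_eq_zero.mp h3 with h4 | h4
    · linarith
    · exfalso; apply hxy; linarith
  exact ⟨hd, by rw [hd] at hx; linarith⟩

/-- Bridge lemma: a continuous function locally affine off `P` is affine on any
interval avoiding `P`. -/
lemma affine_of_local {f : ℝ → ℝ} (hc : Continuous f) {P : Finset ℝ}
    (hP : ∀ x : ℝ, x ∉ P → ∃ n : ℤ, ∀ᶠ t in nhds x, f t = f x + 2 ^ n * (t - x))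
    {a b : ℝ} (hab : a < b) (hdisj : ∀ p ∈ P, p ∉ Set.Ioo a b) :
    ∃ n : ℤ, ∀ t ∈ Set.Icc a b, f t = f a + 2 ^ n * (t - a) := by
  set x₀ : ℝ := (a + b)/2 with hx₀
  have hx₀mem : x₀ ∈ Set.Ioo a b := ⟨by rw [hx₀]; linarith, by rw [hx₀]; linarith⟩
  have hx₀P : x₀ ∉ P := fun hmem => hdisj x₀ hmem hx₀mem
  obtain ⟨n, hn⟩ := hP x₀ hx₀P
  set g : ℝ → ℝ := fun s => f x₀ + 2 ^ n * (s - x₀) with hg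
  set S : Set ℝ := {t | ∀ᶠ s in nhds t, f s = g s} with hS
  have hSopen : IsOpen S := isOpen_setOf_eventually_nhds
  have hSne : (Set.Ioo a b ∩ S).Nonempty := ⟨x₀, hx₀mem, hn⟩
  have hclos : closure S ∩ Set.Ioo a b ⊆ S := by
    rintro t ⟨htc, htm⟩
    have htP : t ∉ P := fun hmem => hdisj t hmem htm
    obtain ⟨nt, hnt⟩ := hP t htP
    obtain ⟨U, hUsub, hUopen, hUt⟩ := eventually_nhds_iff.mp hnt
    obtain ⟨s', hs'S, hs'U⟩ : (S ∩ U).Nonempty := by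
      have := mem_closure_iff_nhds.mp htc U (hUopen.mem_nhds hUt)
      obtain ⟨y, hy1, hy2⟩ := this
      exact ⟨y, hy2, hy1⟩
    -- near s' both affine descriptions hold
    have hev : ∀ᶠ s in nhds s', (f t - 2^nt * t) + 2^nt * s = (f x₀ - 2^n * x₀) + 2^n * s := by
      have h1 : ∀ᶠ s in nhds s', f s = g s := hs'S
      have h2 : ∀ᶠ s in nhds s', s ∈ U := hUopen.mem_nhds hs'U
      filter_upwards [h1, h2] with s hsg hsU
      have := hUsub s hsU
      rw [hg] at hsg
      simp only [hg] at hsg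
      linarith [this, hsg]
    obtain ⟨hslope, hconst⟩ := affine_coeffs hev
    rw [hS]
    show ∀ᶠ s in nhds t, f s = g s
    rw [hslope] at hconst
    filter_upwards [hnt] with s hsf
    rw [hsf]
    show f t + 2 ^ nt * (s - t) = f x₀ + 2 ^ n * (s - x₀)
    rw [hslope]
    linear_combination hconst
  have hsub : Set.Ioo a b ⊆ S := isPreconnected_Ioo.subset_of_closure_inter_subset hSopen hSne
    (by intro y hy; exact hclos ⟨hy.1, hy.2⟩)
  have heq : Set.EqOn f g (Set.Ioo a b) := fun t ht => (hsub ht).self_of_nhds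
  have heqc : Set.EqOn f g (Set.Icc a b) := by
    rw [← closure_Ioo hab.ne]
    exact heq.closure hc (by rw [hg]; continuity)
  have ha : f a = g a := heqc (Set.left_mem_Icc.mpr hab.le)
  refine ⟨n, fun t ht => ?_⟩
  rw [heqc ht, ha]
  show f x₀ + 2 ^ n * (t - x₀) = (f x₀ + 2 ^ n * (a - x₀)) + 2 ^ n * (t - a)
  ring

lemma isDyadic_zero : IsDyadic (0:ℝ) := ⟨0, 0, by norm_num⟩

lemma isDyadic_add {u v : ℝ} (hu : IsDyadic u) (hv : IsDyadic v) : IsDyadic (u + v) := by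
  obtain ⟨a, p, rfl⟩ := hu
  obtain ⟨b, q, rfl⟩ := hv
  refine ⟨a * 2^q + b * 2^p, p + q, ?_⟩
  push_cast
  rw [pow_add]
  have h1 : (2:ℝ)^p ≠ 0 := by positivity
  have h2 : (2:ℝ)^q ≠ 0 := by positivity
  field_simp

lemma isDyadic_sub {u v : ℝ} (hu : IsDyadic u) (hv : IsDyadic v) : IsDyadic (u - v) := by
  obtain ⟨b, q, rfl⟩ := hv
  have : IsDyadic (-((b:ℝ)/2^q)) := ⟨-b, q, by push_cast; ring⟩
  have := isDyadic_add hu this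
  simpa [sub_eq_add_neg] using this

lemma isDyadic_zpow_mul (n : ℤ) {u : ℝ} (hu : IsDyadic u) : IsDyadic ((2:ℝ)^n * u) := by
  obtain ⟨a, p, rfl⟩ := hu
  rcases le_or_gt 0 n with h | h
  · obtain ⟨m, rfl⟩ := Int.eq_ofNat_of_zero_le h
    refine ⟨a * 2^m, p, ?_⟩
    rw [zpow_natCast]
    push_cast
    have h1 : (2:ℝ)^p ≠ 0 := by positivity
    field_simp
  · obtain ⟨m, rfl⟩ : ∃ m : ℕ, n = -(m:ℤ) := ⟨(-n).toNat, by omega⟩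
    refine ⟨a, p + m, ?_⟩
    rw [zpow_neg, zpow_natCast, inv_mul_eq_div, div_div, ← pow_add]

/-- `f` maps nonnegative dyadics to dyadics. -/
lemma dyadic_image {f : ℝ → ℝ} (hc : Continuous f) {P : Finset ℝ}
    (hPdy : ∀ p ∈ P, IsDyadic p)
    (hP : ∀ x ∉ P, ∃ n : ℤ, ∀ᶠ t in nhds x, f t = f x + 2^n * (t - x))
    (hf0 : f 0 = 0) :
    ∀ (N : ℕ) (x : ℝ), 0 ≤ x → IsDyadic x →
      (P.filter (fun p => 0 ≤ p ∧ p < x)).card ≤ N → IsDyadic (f x) := by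
  intro N
  induction N with
  | zero =>
    intro x hx0 hxd hcard
    rcases eq_or_lt_of_le hx0 with rfl | hxpos
    · rw [hf0]; exact isDyadic_zero
    have hdisj : ∀ p ∈ P, p ∉ Set.Ioo 0 x := by
      intro p hp hmem
      have hpQ : p ∈ P.filter (fun p => 0 ≤ p ∧ p < x) :=
        Finset.mem_filter.mpr ⟨hp, hmem.1.le, hmem.2⟩
      have := Finset.card_pos.mpr ⟨p, hpQ⟩
      omega
    obtain ⟨n, hn⟩ := affine_of_local hc hP hxpos hdisj
    have := hn x (Set.right_mem_Icc.mpr hxpos.le)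
    rw [this, hf0]
    have := isDyadic_zpow_mul n (isDyadic_sub hxd isDyadic_zero)
    simpa using this
  | succ N ih =>
    intro x hx0 hxd hcard
    rcases eq_or_lt_of_le hx0 with rfl | hxpos
    · rw [hf0]; exact isDyadic_zero
    set Q := P.filter (fun p => 0 ≤ p ∧ p < x) with hQ
    rcases Finset.eq_empty_or_nonempty Q with hemp | hne
    · have hdisj : ∀ p ∈ P, p ∉ Set.Ioo 0 x := by
        intro p hp hmem
        have hpQ : p ∈ Q := Finset.mem_filter.mpr ⟨hp, hmem.1.le, hmem.2⟩
        rw [hemp] at hpQ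
        exact absurd hpQ (Finset.notMem_empty p)
      obtain ⟨n, hn⟩ := affine_of_local hc hP hxpos hdisj
      have := hn x (Set.right_mem_Icc.mpr hxpos.le)
      rw [this, hf0]
      have := isDyadic_zpow_mul n (isDyadic_sub hxd isDyadic_zero)
      simpa using this
    · set u := Q.max' hne with hu
      have huQ : u ∈ Q := Q.max'_mem hne
      obtain ⟨huP, hu0, hux⟩ := Finset.mem_filter.mp huQ
      have hdisj : ∀ p ∈ P, p ∉ Set.Ioo u x := by
        intro p hp hmem
        have hpQ : p ∈ Q := Finset.mem_filter.mpr ⟨hp, le_trans hu0 hmem.1.le, hmem.2⟩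
        have := Q.le_max' p hpQ
        rw [← hu] at this
        linarith [hmem.1]
      obtain ⟨n, hn⟩ := affine_of_local hc hP hux hdisj
      have hfx := hn x (Set.right_mem_Icc.mpr hux.le)
      have hud : IsDyadic u := hPdy u huP
      have hQ' : (P.filter (fun p => 0 ≤ p ∧ p < u)).card ≤ N := by
        have hss : P.filter (fun p => 0 ≤ p ∧ p < u) ⊂ Q := by
          constructor
          · intro p hp
            obtain ⟨h1, h2, h3⟩ := Finset.mem_filter.mp hp
            exact Finset.mem_filter.mpr ⟨h1, h2, by linarith⟩
          · intro hsub
            have := hsub huQ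
            obtain ⟨_, _, habs⟩ := Finset.mem_filter.mp this
            linarith
        have := Finset.card_lt_card hss
        omega
      have hfud : IsDyadic (f u) := ih u hu0 hud hQ'
      rw [hfx]
      exact isDyadic_add hfud (isDyadic_zpow_mul n (isDyadic_sub hxd hud))

end A2PL
namespace A2PL

open Filter Topology

lemma std_step {q q' : ℝ} (k : ℕ) (c : ℤ) (hq : q = (c:ℝ)/2^k) (hq' : q' = q + 1/2^k) :
    Std q q' := ⟨k, c, hq, by rw [hq', hq]; push_cast; ring⟩

theorem PL2below_subset_Gamma : PL2below (7/8) ⊆ (Gamma : Set (Equiv.Perm ℝ)) := by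
  rintro f ⟨⟨hcont, hmono, hout, P, hPdy, hslope⟩, h78⟩
  classical
  have hf0 : (⇑f) 0 = 0 := hout 0 (Or.inl (le_refl 0))
  -- Step 1: common grid exponent for P
  set np : ℝ → ℕ := fun p => if h : p ∈ P then (hPdy p h).choose_spec.choose else 0 with hnp
  set K₀ : ℕ := P.sup np with hK₀
  have hPgrid : ∀ p ∈ P, ∀ L : ℕ, K₀ ≤ L → ∃ a : ℤ, p = (a:ℝ)/2^(L+3) := by
    intro p hp L hL
    obtain ⟨kp, hkp⟩ : ∃ kp, kp = np p := ⟨np p, rfl⟩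
    obtain ⟨a, hpa⟩ : ∃ a : ℤ, p = (a:ℝ)/2^kp := by
      have h1 := (hPdy p hp).choose_spec.choose_spec
      refine ⟨(hPdy p hp).choose, ?_⟩
      rw [hkp, hnp]
      simp only [dif_pos hp]
      exact h1
    have hle : kp ≤ L + 3 := by
      rw [hkp]
      exact le_trans (Finset.le_sup hp) (by omega)
    refine ⟨a * 2^(L + 3 - kp), ?_⟩
    rw [hpa]
    push_cast
    have he : L + 3 = kp + (L + 3 - kp) := by omega
    rw [he, pow_add]
    have h1 : (2:ℝ)^kp ≠ 0 := by positivity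
    have h2 : (2:ℝ)^(L + 3 - kp) ≠ 0 := by positivity
    field_simp
    simp only [Nat.add_sub_cancel_left]
  -- Step 2: affinity on each level-K₀ tile
  have haff0 : ∀ i : ℕ, i < 7 * 2^K₀ → ∃ n : ℤ, ∀ t ∈ Set.Icc ((i:ℝ)/2^(K₀+3)) ((i+1:ℝ)/2^(K₀+3)),
      f t = f ((i:ℝ)/2^(K₀+3)) + 2^n * (t - (i:ℝ)/2^(K₀+3)) := by
    intro i hi
    apply affine_of_local hcont hslope
    · have : (0:ℝ) < 1/2^(K₀+3) := by positivity
      have e : ((i:ℝ)+1)/2^(K₀+3) - (i:ℝ)/2^(K₀+3) = 1/2^(K₀+3) := by ring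
      linarith
    · intro p hp hmem
      obtain ⟨a, rfl⟩ := hPgrid p hp K₀ (le_refl _)
      obtain ⟨h1, h2⟩ := hmem
      have hposd : (0:ℝ) < 2^(K₀+3) := by positivity
      have hi1 : (i:ℝ) < a := by
        have := mul_lt_mul_of_pos_right h1 hposd
        rw [div_mul_cancel₀ _ (ne_of_gt hposd), div_mul_cancel₀ _ (ne_of_gt hposd)] at this
        exact this
      have hi2 : (a:ℝ) < (i:ℝ) + 1 := by
        have := mul_lt_mul_of_pos_right h2 hposd
        rw [div_mul_cancel₀ _ (ne_of_gt hposd), div_mul_cancel₀ _ (ne_of_gt hposd)] at this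
        exact this
      have hi1' : (i:ℤ) < a := by exact_mod_cast hi1
      have hi2' : a < (i:ℤ) + 1 := by exact_mod_cast hi2
      omega
  set ns : ℕ → ℤ := fun i => if h : i < 7 * 2^K₀ then (haff0 i h).choose else 0 with hns
  have haff : ∀ i : ℕ, (hi : i < 7 * 2^K₀) →
      ∀ t ∈ Set.Icc ((i:ℝ)/2^(K₀+3)) ((i+1:ℝ)/2^(K₀+3)),
      f t = f ((i:ℝ)/2^(K₀+3)) + 2^(ns i) * (t - (i:ℝ)/2^(K₀+3)) := by
    intro i hi t ht
    have := (haff0 i hi).choose_spec t ht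
    rw [hns]
    simp only [dif_pos hi]
    exact this
  -- Step 3: dyadic values at level-K₀ gridpoints, uniform denominator
  have hdyval : ∀ i : ℕ, i ≤ 7 * 2^K₀ → IsDyadic (f ((i:ℝ)/2^(K₀+3))) := by
    intro i hi
    apply dyadic_image hcont hPdy hslope hf0 P.card
    · positivity
    · exact ⟨i, K₀+3, by push_cast; ring⟩
    · exact Finset.card_filter_le _ _
  set Md : ℕ → ℕ := fun i => if h : i ≤ 7 * 2^K₀ then (hdyval i h).choose_spec.choose else 0
    with hMd
  set M₀ : ℕ := (Finset.range (7 * 2^K₀ + 1)).sup Md with hM₀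
  have hval : ∀ i : ℕ, i ≤ 7 * 2^K₀ → ∀ L : ℕ, M₀ ≤ L →
      ∃ c : ℤ, f ((i:ℝ)/2^(K₀+3)) = (c:ℝ)/2^L := by
    intro i hi L hL
    obtain ⟨c, hc⟩ : ∃ c : ℤ, f ((i:ℝ)/2^(K₀+3)) = (c:ℝ)/2^(Md i) := by
      have h1 := (hdyval i hi).choose_spec.choose_spec
      refine ⟨(hdyval i hi).choose, ?_⟩
      rw [hMd]
      simp only [dif_pos hi]
      exact h1
    have hle : Md i ≤ L := le_trans (Finset.le_sup (Finset.mem_range.mpr (by omega))) hL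
    refine ⟨c * 2^(L - Md i), ?_⟩
    rw [hc]
    push_cast
    have he : L = Md i + (L - Md i) := by omega
    rw [he, pow_add]
    have h1 : (2:ℝ)^(Md i) ≠ 0 := by positivity
    have h2 : (2:ℝ)^(L - Md i) ≠ 0 := by positivity
    field_simp
    simp only [Nat.add_sub_cancel_left]
  -- Step 4: slope bound
  set NN : ℕ := (Finset.range (7 * 2^K₀)).sup (fun i => (ns i).toNat) with hNN
  have hnsle : ∀ i : ℕ, i < 7 * 2^K₀ → ns i ≤ (NN:ℤ) := by
    intro i hi
    have h1 : ns i ≤ ((ns i).toNat : ℤ) := Int.self_le_toNat _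
    have h2 : (ns i).toNat ≤ NN :=
      Finset.le_sup (f := fun i => (ns i).toNat) (Finset.mem_range.mpr hi)
    omega
  set K : ℕ := K₀ + M₀ + NN with hK
  set D : ℕ := K - K₀ with hD
  have hKD : K = K₀ + D := by omega
  -- basic facts about the K-grid vs K₀-grid
  have hgrid : ∀ j : ℕ, j < 7 * 2^K →
      ∃ i e : ℕ, i < 7 * 2^K₀ ∧ j = 2^D * i + e ∧ e < 2^D := by
    intro j hj
    refine ⟨j / 2^D, j % 2^D, ?_, (Nat.div_add_mod j (2^D)).symm, Nat.mod_lt _ (by positivity)⟩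
    have h2 : (0:ℕ) < 2^D := by positivity
    rw [Nat.div_lt_iff_lt_mul h2]
    calc j < 7 * 2^K := hj
    _ = 7 * 2^K₀ * 2^D := by rw [hKD, pow_add]; ring
  have hpow23 : (2:ℝ)^(K+3) = 2^(K₀+3) * 2^D := by
    rw [hKD]
    rw [show K₀ + D + 3 = (K₀ + 3) + D by omega, pow_add]
  -- the image endpoints
  set q : ℕ → ℝ := fun j => f ((j:ℝ)/2^(K+3)) with hq
  -- endpoint of K-tile j lies in the K₀-tile i
  have hmem2 : ∀ i e : ℕ, i < 7 * 2^K₀ → e ≤ 2^D →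
      ((2^D * i + e : ℕ):ℝ)/2^(K+3) ∈
        Set.Icc ((i:ℝ)/2^(K₀+3)) ((i+1:ℝ)/2^(K₀+3)) := by
    intro i e hi he
    have hpos : (0:ℝ) < 2^(K+3) := by positivity
    have hpos0 : (0:ℝ) < 2^(K₀+3) := by positivity
    have hposD : (0:ℝ) < 2^D := by positivity
    constructor
    · rw [div_le_div_iff₀ hpos0 hpos, hpow23]
      push_cast
      nlinarith [hpos0.le, hposD.le]
    · rw [div_le_div_iff₀ hpos hpos0, hpow23]
      push_cast
      have : (e:ℝ) ≤ 2^D := by exact_mod_cast he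
      nlinarith [hpos0.le]
  -- value formula on K-tile points
  have hqval : ∀ i e : ℕ, i < 7 * 2^K₀ → e ≤ 2^D →
      q (2^D * i + e) = f ((i:ℝ)/2^(K₀+3)) + 2^(ns i) * ((e:ℝ)/2^(K+3)) := by
    intro i e hi he
    have h1 := haff i hi _ (hmem2 i e hi he)
    rw [hq]
    simp only
    rw [h1]
    congr 1
    congr 1
    push_cast
    rw [hpow23]
    have h2 : (2:ℝ)^(K₀+3) ≠ 0 := by positivity
    have h3 : (2:ℝ)^D ≠ 0 := by positivity
    field_simp
    ring
  -- the image tiling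
  have hVstd : ∀ j : ℕ, j < 7 * 2^K → Std (q j) (q (j+1)) := by
    intro j hj
    obtain ⟨i, e, hi, hje, heD⟩ := hgrid j hj
    have hnK : ns i ≤ (K:ℤ) := le_trans (hnsle i hi) (by exact_mod_cast by omega : (NN:ℤ) ≤ K)
    set kj : ℕ := ((K:ℤ) + 3 - ns i).toNat with hkj
    have hkjz : (kj:ℤ) = (K:ℤ) + 3 - ns i := Int.toNat_of_nonneg (by omega)
    have hkjM : M₀ ≤ kj := by
      have h1 : ns i ≤ (NN:ℤ) := hnsle i hi
      have : (M₀:ℤ) ≤ (kj:ℤ) := by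
        rw [hkjz, hK]
        push_cast
        omega
      exact_mod_cast this
    obtain ⟨c, hc⟩ := hval i (by omega) kj hkjM
    have hpowkj : (2:ℝ)^(ns i) / 2^(K+3) = 1/2^kj := by
      have h2 : ((K:ℤ)+3) = ((K+3 : ℕ) : ℤ) := by push_cast; ring
      have h3 : (2:ℝ)^((K+3:ℕ)) = (2:ℝ)^(((K+3:ℕ):ℤ)) := by rw [zpow_natCast]
      rw [h3, ← h2]
      rw [show (2:ℝ)^(ns i) / 2^((K:ℤ)+3) = 2^((ns i) - ((K:ℤ)+3)) from
        (zpow_sub₀ (by norm_num : (2:ℝ) ≠ 0) _ _).symm]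
      have h4 : (ns i) - ((K:ℤ)+3) = -(kj:ℤ) := by omega
      rw [h4, zpow_neg, zpow_natCast, one_div]
    have hq1 : q (2^D * i + e) = ((c + e : ℤ):ℝ)/2^kj := by
      rw [hqval i e hi (by omega), hc]
      have e1 : (2:ℝ)^(ns i) * ((e:ℝ)/2^(K+3)) = (e:ℝ) * ((2:ℝ)^(ns i) / 2^(K+3)) := by ring
      rw [e1, hpowkj]
      push_cast
      ring
    have hq2 : q (2^D * i + (e+1)) = q (2^D * i + e) + 1/2^kj := by
      rw [hqval i (e+1) hi (by omega), hqval i e hi (by omega)]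
      have e1 : (2:ℝ)^(ns i) * (((e:ℕ)+1:ℝ)/2^(K+3)) - 2^(ns i) * ((e:ℝ)/2^(K+3)) =
          (2:ℝ)^(ns i) / 2^(K+3) := by push_cast; ring
      push_cast
      push_cast at e1
      rw [← hpowkj]
      linarith [e1]
    have hej : 2^D * i + e = j := hje.symm
    rw [← hej]
    exact std_step kj _ hq1 hq2
  set V : Tiling := {
    m := 7 * 2^K
    p := q
    hm := by have := Nat.one_le_two_pow (n := K); omega
    h0 := by
      rw [hq]
      simp only [Nat.cast_zero, zero_div]
      exact hf0
    htop := by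
      rw [hq]
      simp only
      have e1 : ((7 * 2^K : ℕ):ℝ)/2^(K+3) = 7/8 := by
        push_cast
        rw [show K + 3 = K + 3 by rfl, pow_add]
        have h2 : (2:ℝ)^K ≠ 0 := by positivity
        field_simp
        ring
      rw [e1]
      exact h78 (7/8) (le_refl _)
    hstd := hVstd
  } with hV
  have hmV : (unif K).m = V.m := rfl
  -- f agrees with the tiling map
  refine ⟨unif K, V, rfl, ?_⟩
  apply Equiv.ext
  intro t
  show f t = plf (unif K) V t
  rcases le_or_gt t 0 with ht | ht
  · rw [plf_nonpos _ _ ht]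
    exact hout t (Or.inl ht)
  rcases le_or_gt (7/8) t with ht8 | ht8
  · rw [plf_top hmV ht8]
    exact h78 t ht8
  · obtain ⟨j, hj, hjt, hjt'⟩ := chain_locate (unif K).hstd (t := t)
      (by show (0:ℕ)/(2:ℝ)^(K+3) ≤ t; norm_num; linarith)
      (by
        show t < ((7*2^K : ℕ):ℝ)/2^(K+3)
        have e1 : ((7 * 2^K : ℕ):ℝ)/2^(K+3) = 7/8 := by
          push_cast
          rw [pow_add]
          have h2 : (2:ℝ)^K ≠ 0 := by positivity
          field_simp
          ring
        rw [e1]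
        exact ht8)
    have hjm : j < 7 * 2^K := hj
    obtain ⟨i, e, hi, hje, heD⟩ := hgrid j hjm
    -- t lies in the K₀-tile i
    have hmemt : t ∈ Set.Icc ((i:ℝ)/2^(K₀+3)) ((i+1:ℝ)/2^(K₀+3)) := by
      have h1 := (hmem2 i e hi (by omega)).1
      have h2 := (hmem2 i (e+1) hi (by omega)).2
      have hje' : ((j:ℕ):ℝ)/2^(K+3) = ((2^D * i + e : ℕ):ℝ)/2^(K+3) := by rw [hje]
      have hje1' : ((j+1:ℕ):ℝ)/2^(K+3) = ((2^D * i + (e+1) : ℕ):ℝ)/2^(K+3) := by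
        rw [show 2^D * i + (e+1) = (j+1) by omega]
      constructor
      · apply le_trans h1
        rw [← hje']
        exact hjt
      · apply le_trans (le_of_lt hjt')
        show ((j+1:ℕ):ℝ)/2^(K+3) ≤ _
        rw [hje1']
        exact h2
    have hft := haff i hi t hmemt
    rw [plf_piece hmV hj hjt hjt'.le]
    have hVj : V.p j = q j := rfl
    have hVj1 : V.p (j+1) = q (j+1) := rfl
    have hqj : q j = f ((i:ℝ)/2^(K₀+3)) + 2^(ns i) * ((e:ℝ)/2^(K+3)) := by
      have h1 := hqval i e hi (by omega)
      rw [← hje] at h1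
      exact h1
    have hqj1 : q (j+1) = f ((i:ℝ)/2^(K₀+3)) + 2^(ns i) * (((e:ℕ)+1:ℝ)/2^(K+3)) := by
      have h1 := hqval i (e+1) hi (by omega)
      have he1 : 2^D * i + (e+1) = j + 1 := by omega
      rw [he1] at h1
      rw [h1]
      push_cast
      ring_nf
    have hupj : (unif K).p j = ((j:ℕ):ℝ)/2^(K+3) := rfl
    have hupj1 : (unif K).p (j+1) = ((j+1:ℕ):ℝ)/2^(K+3) := rfl
    have hsplit : ((j:ℕ):ℝ)/2^(K+3) = (i:ℝ)/2^(K₀+3) + (e:ℝ)/2^(K+3) := by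
      rw [hje]
      push_cast
      rw [hpow23]
      have h2 : (2:ℝ)^(K₀+3) ≠ 0 := by positivity
      have h3 : (2:ℝ)^D ≠ 0 := by positivity
      field_simp
    have hslj : sl (unif K) V j = 2^(ns i) := by
      unfold sl
      rw [hVj, hVj1, hqj, hqj1, hupj, hupj1]
      have hd : (((j:ℕ)+1:ℕ):ℝ)/2^(K+3) - ((j:ℕ):ℝ)/2^(K+3) = 1/2^(K+3) := by
        push_cast
        ring
      rw [hd]
      have hnum : f ((i:ℝ)/2^(K₀+3)) + 2^(ns i) * (((e:ℕ)+1:ℝ)/2^(K+3)) -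
          (f ((i:ℝ)/2^(K₀+3)) + 2^(ns i) * ((e:ℝ)/2^(K+3))) =
          2^(ns i) * (1/2^(K+3)) := by push_cast; ring
      rw [hnum, mul_div_assoc, div_self (by positivity : (1:ℝ)/2^(K+3) ≠ 0), mul_one]
    rw [hslj, hVj, hqj, hft, hupj]
    linear_combination (2:ℝ)^(ns i) * hsplit

end A2PL
namespace A2PL

lemma xkfun0_eq (t : ℝ) : xkfun 0 t = x0fun t := by
  unfold xkfun
  norm_num
  split_ifs with h1 h2
  · rw [x0fun_nonpos h1]
  · rfl
  · rw [x0fun_top (by linarith)]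

lemma gE1_mem_Gamma : gE1 ∈ Gamma := ⟨TA, TB, rfl, gE1_def⟩

lemma gE2_mem_Gamma : gE2 ∈ Gamma := ⟨comb 1, TB, rfl, gE2_def⟩

lemma Gamma_subset_PL2below : (Gamma : Set (Equiv.Perm ℝ)) ⊆ PL2below (7/8) := by
  rintro f ⟨T, S, h, rfl⟩
  exact PE_mem_PL2below T S h

end A2PL

/-- `A₂ = ⟨x₀x₁⁻¹, x₀x₂⁻¹⟩` equals `PL₂([0, 7/8])`. -/
theorem A2_eq_PL2below (x : ℕ → Equiv.Perm ℝ) (hx : ∀ k t, x k t = xkfun k t) :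
    ((Subgroup.closure {x 0 * (x 1)⁻¹, x 0 * (x 2)⁻¹} : Subgroup (Equiv.Perm ℝ)) :
        Set (Equiv.Perm ℝ)) = PL2below (7/8 : ℝ) := by
  have hx1 : x 0 * (x 1)⁻¹ = A2PL.gE1 := by
    have hkey : x 0 = A2PL.gE1 * x 1 := by
      apply Equiv.ext
      intro t
      have h1 : (A2PL.gE1 * x 1) t = A2PL.plf A2PL.TA A2PL.TB (xkfun 1 t) := by
        show A2PL.gE1 ((x 1) t) = _
        rw [hx 1 t]; rfl
      rw [hx 0 t, A2PL.xkfun0_eq, A2PL.main_id1 t, h1]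
    rw [hkey]
    group
  have hx2 : x 0 * (x 2)⁻¹ = A2PL.gE2 := by
    have hkey : x 0 = A2PL.gE2 * x 2 := by
      apply Equiv.ext
      intro t
      have h1 : (A2PL.gE2 * x 2) t = A2PL.plf (A2PL.comb 1) A2PL.TB (xkfun 2 t) := by
        show A2PL.gE2 ((x 2) t) = _
        rw [hx 2 t]; rfl
      rw [hx 0 t, A2PL.xkfun0_eq, A2PL.main_id2 t, h1]
    rw [hkey]
    group
  rw [hx1, hx2]
  apply subset_antisymm
  · intro f hf
    have hle : A2PL.Hgen ≤ A2PL.Gamma := by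
      apply (Subgroup.closure_le _).mpr
      intro g hg
      rcases hg with hg | hg
      · rw [hg]
        exact A2PL.gE1_mem_Gamma
      · rw [Set.mem_singleton_iff.mp hg]
        exact A2PL.gE2_mem_Gamma
    exact A2PL.Gamma_subset_PL2below (hle hf)
  · intro f hf
    exact A2PL.gamma_le_Hgen (A2PL.PL2below_subset_Gamma hf)
end
end

section
/- Let a, b ∈ F have normal forms a = x_{i₁}⋯x_{i_m} x_{j_m}⁻¹⋯x_{j₁}⁻¹ where a ∈ A_s (so i_k − k < s and j_k − k < s for all k) and b = x_{c₁}⋯x_{c_u} x_{d_v}⁻¹⋯x_{d₁}⁻¹ where b ∈ B_s (so all c_i, d_j ≥ s+1). Then in F, ab = x_{i₁}⋯x_{i_m} x_{c₁+m}⋯x_{c_u+m} x_{d_v+m}⁻¹⋯x_{d₁+m}⁻¹ x_{j_m}⁻¹⋯x_{j₁}⁻¹, and this word is again in normal form. -/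
/-- The relations of the infinite presentation of Thompson's group `F`:
`x_k⁻¹ x_n x_k = x_{n+1}` for all `k < n`. -/
def thompsonRels : Set (FreeGroup ℕ) :=
  {r | ∃ n k : ℕ, k < n ∧
    r = (FreeGroup.of k)⁻¹ * FreeGroup.of n * FreeGroup.of k * (FreeGroup.of (n + 1))⁻¹}

/-- Thompson's group `F`, via its standard infinite presentation. -/
def ThompsonF : Type := PresentedGroup thompsonRels

noncomputable instance : Group ThompsonF := by unfold ThompsonF; infer_instance

/-- The standard generators `x_k` of Thompson's group `F`. -/
noncomputable def xgen (k : ℕ) : ThompsonF := PresentedGroup.of k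

/-- The element of `F` given by the word `x_{i₁}⋯x_{i_u} · x_{j_v}⁻¹⋯x_{j₁}⁻¹`, where
`I = [i₁, …, i_u]` and `J = [j₁, …, j_v]`. -/
noncomputable def nfWord (I J : List ℕ) : ThompsonF :=
  (I.map xgen).prod * ((J.map xgen).prod)⁻¹

/-- The word `x_{i₁}⋯x_{i_u} · x_{j_v}⁻¹⋯x_{j₁}⁻¹` encoded by `(I, J)` is in normal form:
both index lists are nondecreasing, and if `x_i` and `x_i⁻¹` both occur then `x_{i+1}`
or `x_{i+1}⁻¹` occurs too. -/
def IsNormalForm (I J : List ℕ) : Prop :=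
  I.Pairwise (· ≤ ·) ∧ J.Pairwise (· ≤ ·) ∧
  ∀ i : ℕ, i ∈ I → i ∈ J → (i + 1 ∈ I ∨ i + 1 ∈ J)

/-
Conjugating `x_c` by `x_{j₁}⋯x_{j_t}` with every `j_k < c + k` applies the defining relation
`t` times and yields `x_{c+t}`. Since `b` only involves indices `≥ s + 1` and `a ∈ A_s`, the whole
of `b` is thereby moved past the `m` negative letters of `a` with every index shifted by `m`.
The shifted indices of `b` exceed all indices of `a`, so concatenating the two normal forms keeps
both halves sorted and creates no new pair `x_i, x_i⁻¹`.
-/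

lemma xgen_inv_mul_xgen_mul_xgen {k n : ℕ} (h : k < n) :
    (xgen k)⁻¹ * xgen n * xgen k = xgen (n + 1) := by
  have hrel : (QuotientGroup.mk' (Subgroup.normalClosure thompsonRels) :
      FreeGroup ℕ →* PresentedGroup thompsonRels)
      ((FreeGroup.of k)⁻¹ * FreeGroup.of n * FreeGroup.of k * (FreeGroup.of (n + 1))⁻¹) = 1 :=
    (QuotientGroup.eq_one_iff _).2 (Subgroup.subset_normalClosure ⟨n, k, h, rfl⟩)
  simp only [map_mul, map_inv] at hrel
  exact mul_inv_eq_one.mp hrel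

lemma xgen_conj_prod_of_getElem_lt (J : List ℕ) (c : ℕ)
    (hJ : ∀ (k : ℕ) (h : k < J.length), J[k] < c + k) :
    ((J.map xgen).prod)⁻¹ * xgen c * (J.map xgen).prod = xgen (c + J.length) := by
  induction J generalizing c with
  | nil => simp
  | cons j J ih =>
    have hjc : j < c := hJ 0 (by simp)
    have hJc : ∀ (k : ℕ) (h : k < J.length), J[k] < c + 1 + k := fun k hk => by
      have := hJ (k + 1) (by simpa using hk)
      simp only [List.getElem_cons_succ] at this
      omega
    calc ((List.map xgen (j :: J)).prod)⁻¹ * xgen c * (List.map xgen (j :: J)).prod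
        = ((J.map xgen).prod)⁻¹ * ((xgen j)⁻¹ * xgen c * xgen j) * (J.map xgen).prod := by
          simp only [List.map_cons, List.prod_cons]; group
      _ = xgen (c + (j :: J).length) := by
          rw [xgen_inv_mul_xgen_mul_xgen hjc, ih (c + 1) hJc, List.length_cons, Nat.add_right_comm,
            Nat.add_assoc]

lemma inv_mul_prod_map_xgen_mul (g : ThompsonF) (n : ℕ) (L : List ℕ)
    (hL : ∀ c ∈ L, g⁻¹ * xgen c * g = xgen (c + n)) :
    g⁻¹ * (L.map xgen).prod * g = ((L.map (· + n)).map xgen).prod := by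
  have hconj := map_list_prod (MulAut.conj g⁻¹) (L.map xgen)
  simp only [MulAut.conj_apply, inv_inv, List.map_map] at hconj
  rw [hconj, List.map_map]
  exact congrArg List.prod (List.map_congr_left fun c hc => by simpa using hL c hc)

lemma nfWord_mul_nfWord_of_getElem_lt (I J C D : List ℕ)
    (hJ : ∀ c ∈ C ++ D, ∀ (k : ℕ) (h : k < J.length), J[k] < c + k) :
    nfWord I J * nfWord C D
      = nfWord (I ++ C.map (· + J.length)) (J ++ D.map (· + J.length)) := by
  have hconj (L : List ℕ) (hL : ∀ c ∈ L, c ∈ C ++ D) :=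
    inv_mul_prod_map_xgen_mul _ _ L fun c hc => xgen_conj_prod_of_getElem_lt J c (hJ c (hL c hc))
  have hC := hconj C fun c hc => List.mem_append_left D hc
  have hD := hconj D fun c hc => List.mem_append_right C hc
  simp only [nfWord, List.map_append, List.prod_append, ← hC, ← hD]
  group

lemma IsNormalForm.map_add {C D : List ℕ} (h : IsNormalForm C D) (m : ℕ) :
    IsNormalForm (C.map (· + m)) (D.map (· + m)) := by
  obtain ⟨hC, hD, hpair⟩ := h
  refine ⟨List.pairwise_map.mpr (hC.imp fun hab => by omega),
    List.pairwise_map.mpr (hD.imp fun hab => by omega), ?_⟩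
  simp only [List.mem_map]
  rintro _ ⟨c, hc, rfl⟩ ⟨d, hd, hdc⟩
  obtain rfl : d = c := by omega
  exact (hpair d hc hd).imp (fun h => ⟨d + 1, h, by omega⟩) (fun h => ⟨d + 1, h, by omega⟩)

lemma IsNormalForm.append {I J C D : List ℕ} (hIJ : IsNormalForm I J) (hCD : IsNormalForm C D)
    (hlt : ∀ a ∈ I ++ J, ∀ b ∈ C ++ D, a < b) :
    IsNormalForm (I ++ C) (J ++ D) := by
  obtain ⟨hI, hJ, hIJpair⟩ := hIJ
  obtain ⟨hC, hD, hCDpair⟩ := hCD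
  refine ⟨List.pairwise_append.mpr ⟨hI, hC, fun a ha b hb => ?_⟩,
    List.pairwise_append.mpr ⟨hJ, hD, fun a ha b hb => ?_⟩, ?_⟩
  · exact (hlt a (by simp [ha]) b (by simp [hb])).le
  · exact (hlt a (by simp [ha]) b (by simp [hb])).le
  intro i hi hj
  rcases List.mem_append.mp hi with hiI | hiC <;> rcases List.mem_append.mp hj with hiJ | hiD
  · exact (hIJpair i hiI hiJ).imp (List.mem_append_left C) (List.mem_append_left D)
  · exact absurd (hlt i (by simp [hiI]) i (by simp [hiD])) (lt_irrefl i)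
  · exact absurd (hlt i (by simp [hiJ]) i (by simp [hiC])) (lt_irrefl i)
  · exact (hCDpair i hiC hiD).imp (List.mem_append_right I) (List.mem_append_right J)

lemma lt_add_length_of_getElem_lt {L : List ℕ} {s : ℕ}
    (hL : ∀ (k : ℕ) (h : k < L.length), L[k] < s + k + 1) : ∀ x ∈ L, x < s + L.length := by
  intro x hx
  obtain ⟨k, hk, rfl⟩ := List.getElem_of_mem hx
  have := hL k hk
  omega

theorem normal_form_of_As_mul_Bs_general (s : ℕ) (I J C D : List ℕ)
    (hlen : I.length = J.length)
    (hInf : IsNormalForm I J) (hCnf : IsNormalForm C D)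
    (hI : ∀ (k : ℕ) (h : k < I.length), I[k] < s + k + 1)
    (hJ : ∀ (k : ℕ) (h : k < J.length), J[k] < s + k + 1)
    (hC : ∀ c ∈ C, s + 1 ≤ c) (hD : ∀ d ∈ D, s + 1 ≤ d) :
    nfWord I J * nfWord C D
        = nfWord (I ++ C.map (· + I.length)) (J ++ D.map (· + I.length)) ∧
      IsNormalForm (I ++ C.map (· + I.length)) (J ++ D.map (· + I.length)) := by
  have hCD : ∀ c ∈ C ++ D, s + 1 ≤ c := by
    simpa only [List.mem_append, or_imp, forall_and] using ⟨hC, hD⟩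
  refine ⟨?_, hInf.append (hCnf.map_add _) ?_⟩
  · rw [hlen]
    refine nfWord_mul_nfWord_of_getElem_lt I J C D fun c hc k hk => ?_
    have := hJ k hk
    have := hCD c hc
    omega
  · intro a ha b hb
    have ha' : a < s + I.length := by
      rcases List.mem_append.mp ha with ha | ha
      · exact lt_add_length_of_getElem_lt hI a ha
      · exact hlen ▸ lt_add_length_of_getElem_lt hJ a ha
    obtain ⟨c, hc, rfl⟩ : ∃ c ∈ C ++ D, c + I.length = b := by
      simpa only [← List.map_append, List.mem_map] using hb
    have := hCD c hc
    omega

/-- The normal form of a product `a * b` with `a ∈ A_s` and `b ∈ B_s` is obtained by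
shifting the indices of `b`'s normal form by `m` and inserting it in the middle of
`a`'s normal form. -/
theorem normal_form_of_As_mul_Bs (s : ℕ) (hs : 1 ≤ s) (I J C D : List ℕ)
    (hlen : I.length = J.length)
    (hInf : IsNormalForm I J) (hCnf : IsNormalForm C D)
    (hI : ∀ (k : ℕ) (h : k < I.length), I[k] < s + k + 1)
    (hJ : ∀ (k : ℕ) (h : k < J.length), J[k] < s + k + 1)
    (hC : ∀ c ∈ C, s + 1 ≤ c) (hD : ∀ d ∈ D, s + 1 ≤ d) :
    nfWord I J * nfWord C D
        = nfWord (I ++ C.map (· + I.length)) (J ++ D.map (· + I.length)) ∧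
      IsNormalForm (I ++ C.map (· + I.length)) (J ++ D.map (· + I.length)) :=
  normal_form_of_As_mul_Bs_general s I J C D hlen hInf hCnf hI hJ hC hD
end

section
/- In the Ko-Lee variant protocol with u₂ = b₁wb₂ (b₁, b₂ ∈ B_s = PL₂([φ_s,1]), w ∈ PL₂([0,1]) with w(φ_s) ≤ φ_s): if b₀ ∈ B_s satisfies b₀⁻¹(w⁻¹(φ_s)) = u₂⁻¹(φ_s), and we set b₂' = b₂b₀⁻¹ and u₂' = b₁wb₂', then b₂'(w⁻¹(φ_s)) = w⁻¹(φ_s) and b₂'(t) = w⁻¹(u₂'(t)) for all t ∈ [0, w⁻¹(φ_s)]. -/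
/-! Since `b₁` fixes `φ_s`, `u₂⁻¹(φ_s) = b₂⁻¹(w⁻¹(φ_s))`, so the hypothesis on `b₀` says
exactly that `b₂' = b₂ b₀⁻¹` fixes `w⁻¹(φ_s)`. Being increasing, `b₂'` then maps
`[0, w⁻¹(φ_s)]` into itself and `w` maps that into `[0, φ_s]`, where `b₁` is the identity;
hence `u₂' = w b₂'` there. -/

namespace Equiv.Perm

theorem monotone_inv {α : Type*} [LinearOrder α] {f : Perm α} (hf : StrictMono f) :
    Monotone ⇑f⁻¹ := fun a b hab => hf.le_iff_le.1 (by simpa using hab)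

theorem mul_inv_apply_eq_self_of_inv_apply_eq {α : Type*} {w b₀ b₁ b₂ : Perm α} {p : α}
    (hb₁ : b₁ p = p) (hb₀ : b₀⁻¹ (w⁻¹ p) = (b₁ * w * b₂)⁻¹ p) :
    (b₂ * b₀⁻¹) (w⁻¹ p) = w⁻¹ p := by
  have hb₁inv : b₁⁻¹ p = p := by rw [inv_eq_iff_eq, hb₁]
  rw [mul_apply, hb₀]
  simp [mul_inv_rev, mul_apply, hb₁inv]

theorem apply_eq_inv_apply_mul_of_le {α : Type*} [LinearOrder α] {w b₁ c : Perm α} {p t : α}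
    (hb₁ : ∀ x ≤ p, b₁ x = x) (hw : Monotone w) (hc : Monotone c)
    (hcp : c (w⁻¹ p) = w⁻¹ p) (ht : t ≤ w⁻¹ p) : c t = w⁻¹ ((b₁ * w * c) t) := by
  have hwct : w (c t) ≤ p :=
    calc w (c t) ≤ w (c (w⁻¹ p)) := hw (hc ht)
      _ = p := by rw [hcp, coe_inv, Equiv.apply_symm_apply]
  rw [mul_apply, mul_apply, hb₁ _ hwct, coe_inv, Equiv.symm_apply_apply]

end Equiv.Perm

theorem kolee_variant_attack_general (s : ℕ)
    (w b₁ b₂ b₀ : Equiv.Perm ℝ)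
    (hw : IsPL2 w)
    (hb₁ : b₁ ∈ PL2above (1 - (2:ℝ)^(-(s:ℤ)-1)))
    (hb₂ : b₂ ∈ PL2above (1 - (2:ℝ)^(-(s:ℤ)-1)))
    (hb₀ : b₀ ∈ PL2above (1 - (2:ℝ)^(-(s:ℤ)-1)))
    (hb₀eq : b₀⁻¹ (w⁻¹ (1 - (2:ℝ)^(-(s:ℤ)-1))) = (b₁ * w * b₂)⁻¹ (1 - (2:ℝ)^(-(s:ℤ)-1))) :
    (b₂ * b₀⁻¹) (w⁻¹ (1 - (2:ℝ)^(-(s:ℤ)-1))) = w⁻¹ (1 - (2:ℝ)^(-(s:ℤ)-1)) ∧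
    ∀ t ∈ Set.Icc (0:ℝ) (w⁻¹ (1 - (2:ℝ)^(-(s:ℤ)-1))),
      (b₂ * b₀⁻¹) t = w⁻¹ ((b₁ * w * (b₂ * b₀⁻¹)) t) := by
  have hfix := Equiv.Perm.mul_inv_apply_eq_self_of_inv_apply_eq (hb₁.2 _ le_rfl) hb₀eq
  have hmono : Monotone ⇑(b₂ * b₀⁻¹) :=
    hb₂.1.2.1.monotone.comp (Equiv.Perm.monotone_inv hb₀.1.2.1)
  exact ⟨hfix, fun t ht =>
    Equiv.Perm.apply_eq_inv_apply_mul_of_le hb₁.2 hw.2.1.monotone hmono hfix ht.2⟩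

/-- Attack on the Ko–Lee variant protocol: with `u₂ = b₁ w b₂` where `b₁, b₂ ∈ B_s =
PL₂([φ_s,1])` and `w(φ_s) ≤ φ_s`, if `b₀ ∈ B_s` satisfies `b₀⁻¹(w⁻¹(φ_s)) = u₂⁻¹(φ_s)`,
then `b₂' := b₂ b₀⁻¹` fixes `w⁻¹(φ_s)` and is given by `w⁻¹ ∘ u₂'` on `[0, w⁻¹(φ_s)]`,
where `u₂' = b₁ w b₂'`. -/
theorem kolee_variant_attack (s : ℕ) (hs : 1 ≤ s)
    (w b₁ b₂ b₀ : Equiv.Perm ℝ)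
    (hw : IsPL2 w) (hwφ : w (1 - (2:ℝ)^(-(s:ℤ)-1)) ≤ 1 - (2:ℝ)^(-(s:ℤ)-1))
    (hb₁ : b₁ ∈ PL2above (1 - (2:ℝ)^(-(s:ℤ)-1)))
    (hb₂ : b₂ ∈ PL2above (1 - (2:ℝ)^(-(s:ℤ)-1)))
    (hb₀ : b₀ ∈ PL2above (1 - (2:ℝ)^(-(s:ℤ)-1)))
    (hb₀eq : b₀⁻¹ (w⁻¹ (1 - (2:ℝ)^(-(s:ℤ)-1))) = (b₁ * w * b₂)⁻¹ (1 - (2:ℝ)^(-(s:ℤ)-1))) :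
    (b₂ * b₀⁻¹) (w⁻¹ (1 - (2:ℝ)^(-(s:ℤ)-1))) = w⁻¹ (1 - (2:ℝ)^(-(s:ℤ)-1)) ∧
    ∀ t ∈ Set.Icc (0:ℝ) (w⁻¹ (1 - (2:ℝ)^(-(s:ℤ)-1))),
      (b₂ * b₀⁻¹) t = w⁻¹ ((b₁ * w * (b₂ * b₀⁻¹)) t) :=
  kolee_variant_attack_general s w b₁ b₂ b₀ hw hb₁ hb₂ hb₀ hb₀eq
end

section
/- Let d ∈ (0,1), let w be a homeomorphism of [0,1] with w(d) ≤ d, and let b₁', b₂' be homeomorphisms that are the identity on [0,d], with u₂' = b₁'wb₂' and b₂'(w⁻¹(d)) = w⁻¹(d). If b_{σ₂} is any homeomorphism fixing [0,d] pointwise that agrees with b₂' on [0, w⁻¹(d)], then b_{σ₁} := u₂' b_{σ₂}⁻¹ w⁻¹ is also the identity on [0,d], and u₂' = b_{σ₁} w b_{σ₂}. -/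
open Set Equiv

/-- An orientation-preserving homeomorphism of `[0,1]`, modeled as a permutation of `ℝ`
that is continuous, strictly increasing, and the identity outside `[0,1]`. -/
def IsHomeoI (f : Equiv.Perm ℝ) : Prop :=
  Continuous ⇑f ∧ StrictMono ⇑f ∧ ∀ t : ℝ, t ≤ 0 ∨ 1 ≤ t → f t = t

theorem IsHomeoI.strictMono {f : Perm ℝ} (hf : IsHomeoI f) : StrictMono f :=
  hf.2.1

theorem IsHomeoI.apply_zero {f : Perm ℝ} (hf : IsHomeoI f) : f 0 = 0 :=
  hf.2.2 0 (Or.inl le_rfl)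

section LinearOrder

variable {α : Type*} [LinearOrder α]

theorem StrictMono.perm_inv_mapsTo_Icc {f : Perm α} (hf : StrictMono f) (a b : α) :
    MapsTo ⇑f⁻¹ (Icc (f a) (f b)) (Icc a b) := fun x ⟨hax, hxb⟩ =>
  ⟨hf.le_iff_le.1 (by simpa only [Perm.coe_inv, apply_symm_apply]),
    hf.le_iff_le.1 (by simpa only [Perm.coe_inv, apply_symm_apply])⟩

/- Since `g` is monotone and fixes both ends of `[a, w⁻¹ d]`, `g⁻¹` maps that interval into itself,
so `b₂ g⁻¹` is the identity there; and `w⁻¹` maps `[a, d]` into `[a, w⁻¹ d]`. -/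
theorem Equiv.Perm.apply_eq_self_of_eqOn_Icc {a d : α} {b₁ w b₂ g : Perm α}
    (hw : StrictMono w) (hg : StrictMono g) (hwa : w a = a) (hga : g a = a)
    (hgc : g (w⁻¹ d) = w⁻¹ d) (hb₁ : ∀ t ∈ Icc a d, b₁ t = t)
    (hagree : EqOn g b₂ (Icc a (w⁻¹ d))) :
    ∀ t ∈ Icc a d, (b₁ * w * b₂ * g⁻¹ * w⁻¹) t = t := by
  intro t ht
  have hs : w⁻¹ t ∈ Icc a (w⁻¹ d) :=
    hw.perm_inv_mapsTo_Icc a (w⁻¹ d) (by simpa only [hwa, Perm.coe_inv, apply_symm_apply])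
  have hr : g⁻¹ (w⁻¹ t) ∈ Icc a (w⁻¹ d) :=
    hg.perm_inv_mapsTo_Icc a (w⁻¹ d) (by rwa [hga, hgc])
  calc (b₁ * w * b₂ * g⁻¹ * w⁻¹) t = b₁ (w (b₂ (g⁻¹ (w⁻¹ t)))) := rfl
    _ = b₁ t := by rw [← hagree hr]; simp only [Perm.coe_inv, apply_symm_apply]
    _ = t := hb₁ t ht

end LinearOrder

theorem kolee_variant_recovered_pair_general (d : ℝ) (hd : d ∈ Set.Ioo (0:ℝ) 1)
    (w b₁' b₂' bσ₂ u₂' bσ₁ : Equiv.Perm ℝ)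
    (hw : IsHomeoI w)
    (hbσ₂ : IsHomeoI bσ₂)
    (hb₁'id : ∀ t ∈ Set.Icc (0:ℝ) d, b₁' t = t)
    (hu₂' : u₂' = b₁' * w * b₂')
    (hfix : b₂' (w⁻¹ d) = w⁻¹ d)
    (hagree : ∀ t ∈ Set.Icc (0:ℝ) (w⁻¹ d), bσ₂ t = b₂' t)
    (hbσ₁ : bσ₁ = u₂' * bσ₂⁻¹ * w⁻¹) :
    (∀ t ∈ Set.Icc (0:ℝ) d, bσ₁ t = t) ∧ u₂' = bσ₁ * w * bσ₂ := by
  have hc : w⁻¹ d ∈ Icc 0 (w⁻¹ d) :=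
    hw.strictMono.perm_inv_mapsTo_Icc 0 (w⁻¹ d)
      (by simpa only [hw.apply_zero, Perm.coe_inv, apply_symm_apply] using ⟨hd.1.le, le_rfl⟩)
  have hgc : bσ₂ (w⁻¹ d) = w⁻¹ d := (hagree _ hc).trans hfix
  refine ⟨?_, by rw [hbσ₁]; group⟩
  rw [hbσ₁, hu₂']
  exact Perm.apply_eq_self_of_eqOn_Icc hw.strictMono hbσ₂.strictMono hw.apply_zero hbσ₂.apply_zero hgc
    hb₁'id hagree

/-- Eve's recovered pair in the attack on the Ko–Lee variant protocol: if `bσ₂` fixes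
`[0,d]` pointwise and agrees with `b₂'` on `[0, w⁻¹(d)]`, then `bσ₁ := u₂' bσ₂⁻¹ w⁻¹`
is the identity on `[0,d]` and `u₂' = bσ₁ w bσ₂`. -/
theorem kolee_variant_recovered_pair (d : ℝ) (hd : d ∈ Set.Ioo (0:ℝ) 1)
    (w b₁' b₂' bσ₂ u₂' bσ₁ : Equiv.Perm ℝ)
    (hw : IsHomeoI w) (hwd : w d ≤ d)
    (hb₁' : IsHomeoI b₁') (hb₂' : IsHomeoI b₂') (hbσ₂ : IsHomeoI bσ₂)
    (hb₁'id : ∀ t ∈ Set.Icc (0:ℝ) d, b₁' t = t)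
    (hb₂'id : ∀ t ∈ Set.Icc (0:ℝ) d, b₂' t = t)
    (hu₂' : u₂' = b₁' * w * b₂')
    (hfix : b₂' (w⁻¹ d) = w⁻¹ d)
    (hbσ₂id : ∀ t ∈ Set.Icc (0:ℝ) d, bσ₂ t = t)
    (hagree : ∀ t ∈ Set.Icc (0:ℝ) (w⁻¹ d), bσ₂ t = b₂' t)
    (hbσ₁ : bσ₁ = u₂' * bσ₂⁻¹ * w⁻¹) :
    (∀ t ∈ Set.Icc (0:ℝ) d, bσ₁ t = t) ∧ u₂' = bσ₁ * w * bσ₂ :=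
  kolee_variant_recovered_pair_general d hd w b₁' b₂' bσ₂ u₂' bσ₁ hw hbσ₂ hb₁'id hu₂' hfix hagree
    hbσ₁
end

section
/- Let d ∈ (0,1) and w a homeomorphism of [0,1] with w(d) ≤ d. For any homeomorphisms a (identity on [d,1]) and b (identity on [0,d]), the element z := w·(awb)⁻¹ = w b⁻¹ w⁻¹ a⁻¹ determines a uniquely on [0, w(d)]: if a₁wb₁ = a₂wb₂ with a₁,a₂ identity on [d,1] and b₁,b₂ identity on [0,d], then a₁(t) = a₂(t) for all t ∈ [0, w(d)]. -/
/-- Uniqueness of the `A`-part on `[0, w(d)]`: any two decompositions `a₁ w b₁ = a₂ w b₂`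
with `a₁, a₂` the identity on `[d,1]` and `b₁, b₂` the identity on `[0,d]` have
`a₁ = a₂` on `[0, w(d)]`. -/
theorem decomposition_determines_a (d : ℝ) (hd : d ∈ Set.Ioo (0:ℝ) 1)
    (w a₁ a₂ b₁ b₂ : Equiv.Perm ℝ)
    (hw : IsHomeoI w) (hwd : w d ≤ d)
    (ha₁ : IsHomeoI a₁) (ha₂ : IsHomeoI a₂) (hb₁ : IsHomeoI b₁) (hb₂ : IsHomeoI b₂)
    (ha₁id : ∀ t ∈ Set.Icc d 1, a₁ t = t) (ha₂id : ∀ t ∈ Set.Icc d 1, a₂ t = t)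
    (hb₁id : ∀ t ∈ Set.Icc (0:ℝ) d, b₁ t = t) (hb₂id : ∀ t ∈ Set.Icc (0:ℝ) d, b₂ t = t)
    (heq : a₁ * w * b₁ = a₂ * w * b₂) :
    ∀ t ∈ Set.Icc (0:ℝ) (w d), a₁ t = a₂ t := by
  intro t ht
  obtain ⟨ht0, htd⟩ := ht
  set s : ℝ := w.symm t with hs
  have hws : w s = t := w.apply_symm_apply t
  have hw0 : w 0 = 0 := hw.2.2 0 (Or.inl le_rfl)
  have hs0 : (0:ℝ) ≤ s := by
    by_contra h
    push_neg at h
    have := hw.2.1 h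
    rw [hws, hw0] at this
    linarith
  have hsd : s ≤ d := by
    by_contra h
    push_neg at h
    have := hw.2.1 h
    rw [hws] at this
    linarith
  have h1 : a₁ (w (b₁ s)) = a₂ (w (b₂ s)) := by
    have := congrArg (fun f : Equiv.Perm ℝ => f s) heq
    simpa [Equiv.Perm.mul_apply] using this
  rw [hb₁id s ⟨hs0, hsd⟩, hb₂id s ⟨hs0, hsd⟩, hws] at h1
  exact h1
end
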